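/- arXiv:alg-geom/9410009 — 10 statements merged into one kernel-verified Lean document; each statement's English description precedes it below -/
import Mathlib

section
/- Let A be a local ring with maximal ideal m and residue field k, and let n be a natural number invertible in A. Then the canonical reduction map from the set of n-th roots of unity in A to the set of n-th roots of unity in k is injective. -/
/-- Let `A` be a local ring with residue field `k`, and `n` a natural number invertible
in `A`. Then the reduction map `A → k` is injective on `n`-th roots of unity. -/
theorem stmt0 {A : Type*} [CommRing A] [IsLocalRing A] (n : ℕ) (hn : IsUnit (n : A)) :
    Set.InjOn (IsLocalRing.residue A) {x : A | x ^ n = 1} := by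
  intro x hx y hy hxy
  have hn0 : n ≠ 0 := by
    rintro rfl
    simp at hn
  have hs : (∑ i ∈ Finset.range n, x ^ i * y ^ (n - 1 - i)) * (x - y) = 0 := by
    rw [geom_sum₂_mul, hx, hy, sub_self]
  have hres : IsLocalRing.residue A (∑ i ∈ Finset.range n, x ^ i * y ^ (n - 1 - i))
      = n * IsLocalRing.residue A x ^ (n - 1) := by
    rw [map_sum]
    have : ∀ i ∈ Finset.range n,
        IsLocalRing.residue A (x ^ i * y ^ (n - 1 - i))
          = IsLocalRing.residue A x ^ (n - 1) := by
      intro i hi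
      rw [Finset.mem_range] at hi
      rw [map_mul, map_pow, map_pow, ← hxy, ← pow_add]
      congr 1
      omega
    rw [Finset.sum_congr rfl this, Finset.sum_const, Finset.card_range, nsmul_eq_mul]
  have hxunit : IsUnit (IsLocalRing.residue A x) := by
    refine IsUnit.of_pow_eq_one (n := n) ?_ hn0
    rw [← map_pow, hx, map_one]
  have hsu : IsUnit (∑ i ∈ Finset.range n, x ^ i * y ^ (n - 1 - i)) := by
    rw [← IsLocalRing.notMem_maximalIdeal, ← IsLocalRing.residue_eq_zero_iff, hres]
    have hnk : IsLocalRing.residue A (n : A) ≠ 0 := (hn.map _).ne_zero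
    rw [map_natCast] at hnk
    exact mul_ne_zero hnk (hxunit.pow _).ne_zero
  have := hsu.mul_right_eq_zero.mp hs
  exact sub_eq_zero.mp this
end

section
/- Let A be a commutative local ring, x an element of A, a an element of the maximal ideal of A, and n invertible in A. If x^n = 1 and (x+a)^n = 1 then a = 0. -/
/-- If `A` is a local ring, `n` a positive integer invertible in `A`, `x ∈ A`,
`a` in the maximal ideal, and `x ^ n = 1` and `(x + a) ^ n = 1`, then `a = 0`. -/
theorem stmt1 {A : Type*} [CommRing A] [IsLocalRing A] (n : ℕ) (hn : 0 < n)
    (hu : IsUnit (n : A)) (x a : A) (ha : a ∈ IsLocalRing.maximalIdeal A)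
    (hx : x ^ n = 1) (hxa : (x + a) ^ n = 1) : a = 0 := by
  set S := ∑ i ∈ Finset.range n, (x + a) ^ i * x ^ (n - 1 - i) with hS
  have key : S * a = 0 := by
    have h := geom_sum₂_mul (x + a) x n
    have h2 : (x + a) - x = a := by ring
    rw [h2, hx, hxa, sub_self] at h
    simpa [hS] using h
  have ha0 : IsLocalRing.residue A a = 0 := by
    exact Ideal.Quotient.eq_zero_iff_mem.mpr ha
  have hres : IsLocalRing.residue A S
      = (n : IsLocalRing.ResidueField A) * (IsLocalRing.residue A x) ^ (n - 1) := by
    rw [hS, map_sum]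
    simp only [map_mul, map_pow, map_add, ha0, add_zero]
    rw [geom_sum₂_self]
  have hxu : IsUnit (IsLocalRing.residue A x) := by
    exact IsUnit.of_pow_eq_one (by rw [← map_pow, hx, map_one]) hn.ne'
  have hresu : IsUnit (IsLocalRing.residue A S) := by
    rw [hres]
    have : (n : IsLocalRing.ResidueField A) = IsLocalRing.residue A (n : A) := by
      simp
    rw [this]
    exact (hu.map _).mul (hxu.pow _)
  have hSunit : IsUnit S := by
    by_contra h
    have hm : S ∈ IsLocalRing.maximalIdeal A := h
    have : IsLocalRing.residue A S = 0 := Ideal.Quotient.eq_zero_iff_mem.mpr hm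
    rw [this] at hresu
    exact not_isUnit_zero hresu
  exact (hSunit.mul_right_eq_zero).mp key
end

section
/- Let A ⊆ C be an extension of commutative noetherian rings with C finitely generated as an A-module and C ≠ A. Then there exists an element y ∈ C \ A such that the conductor ideal [A : A[y]] = {a ∈ A : a·A[y] ⊆ A} is a prime ideal of A. -/
/-- The conductor ideal `[A : B] = {a ∈ A : a • B ⊆ A}` of a subalgebra `B` of an
`A`-algebra `C`, as an ideal of `A` (where `A` is identified with its image
`⊥ : Subalgebra A C`). -/
def conductorIdeal (A C : Type*) [CommRing A] [CommRing C] [Algebra A C]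
    (B : Subalgebra A C) : Ideal A where
  carrier := {a : A | ∀ b ∈ B, a • b ∈ (⊥ : Subalgebra A C)}
  zero_mem' := fun b _ => by rw [zero_smul]; exact Subalgebra.zero_mem _
  add_mem' := by
    intro a a' ha ha' b hb
    rw [add_smul]
    exact Subalgebra.add_mem _ (ha b hb) (ha' b hb)
  smul_mem' := by
    intro c a ha b hb
    rw [smul_eq_mul, mul_smul]
    exact Subalgebra.smul_mem _ (ha b hb) c

lemma mem_conductorIdeal {A C : Type*} [CommRing A] [CommRing C] [Algebra A C]
    {B : Subalgebra A C} {a : A} :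
    a ∈ conductorIdeal A C B ↔ ∀ b ∈ B, a • b ∈ (⊥ : Subalgebra A C) := Iff.rfl

/-- Let `A ⊆ C` be an extension of commutative noetherian rings with `C` finitely
generated as an `A`-module and `C ≠ A`.  Then there exists `y ∈ C \ A` such that the
conductor `[A : A[y]]` is a prime ideal of `A`. -/
theorem stmt3 {A C : Type*} [CommRing A] [IsNoetherianRing A] [CommRing C]
    [IsNoetherianRing C] [Algebra A C] (hinj : Function.Injective (algebraMap A C))
    [Module.Finite A C] (hne : (⊥ : Subalgebra A C) ≠ ⊤) :
    ∃ y : C, y ∉ (⊥ : Subalgebra A C) ∧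
      (conductorIdeal A C (Algebra.adjoin A {y})).IsPrime := by
  classical
  set S : Set (Ideal A) :=
    {I | ∃ y : C, y ∉ (⊥ : Subalgebra A C) ∧ I = conductorIdeal A C (Algebra.adjoin A {y})}
    with hS
  have hSne : S.Nonempty := by
    have : ∃ y : C, y ∉ (⊥ : Subalgebra A C) := by
      by_contra h
      push_neg at h
      exact hne (top_unique fun x _ => h x)
    obtain ⟨y, hy⟩ := this
    exact ⟨_, y, hy, rfl⟩
  have hwf : WellFounded ((· > ·) : Ideal A → Ideal A → Prop) :=
    isNoetherian_iff.mp inferInstance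
  obtain ⟨I, hIS, hImax⟩ := hwf.has_min S hSne
  obtain ⟨y, hy, rfl⟩ := hIS
  refine ⟨y, hy, ?_, ?_⟩
  · -- conductor ≠ ⊤
    intro h
    have h1 : (1 : A) ∈ conductorIdeal A C (Algebra.adjoin A {y}) := h ▸ Submodule.mem_top
    have := h1 y (Algebra.self_mem_adjoin_singleton A y)
    rw [one_smul] at this
    exact hy this
  · -- primality
    intro a b hab
    by_contra h
    push_neg at h
    obtain ⟨ha, hb⟩ := h
    rw [mem_conductorIdeal] at hb
    push_neg at hb
    obtain ⟨z, hz, hbz⟩ := hb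
    set y' : C := b • z with hy'
    have hy'mem : y' ∈ Algebra.adjoin A {y} := Subalgebra.smul_mem _ hz b
    have hle : Algebra.adjoin A {y'} ≤ Algebra.adjoin A {y} :=
      Algebra.adjoin_le (Set.singleton_subset_iff.mpr hy'mem)
    -- structure of elements of A[y']
    have key : ∀ w ∈ Algebra.adjoin A {y'}, ∃ c : A, ∃ v ∈ Algebra.adjoin A {y},
        w = algebraMap A C c + b • v := by
      intro w hw
      induction hw using Algebra.adjoin_induction with
      | mem x hx =>
        rw [Set.mem_singleton_iff] at hx
        exact ⟨0, z, hz, by rw [hx, map_zero, zero_add]⟩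
      | algebraMap r => exact ⟨r, 0, Subalgebra.zero_mem _, by rw [smul_zero, add_zero]⟩
      | add x x' _ _ ihx ihx' =>
        obtain ⟨c, v, hv, rfl⟩ := ihx
        obtain ⟨c', v', hv', rfl⟩ := ihx'
        exact ⟨c + c', v + v', Subalgebra.add_mem _ hv hv', by rw [map_add, smul_add]; ring⟩
      | mul x x' _ _ ihx ihx' =>
        obtain ⟨c, v, hv, rfl⟩ := ihx
        obtain ⟨c', v', hv', rfl⟩ := ihx'
        refine ⟨c * c', c • v' + c' • v + b • (v * v'), ?_, ?_⟩
        · exact Subalgebra.add_mem _ (Subalgebra.add_mem _ (Subalgebra.smul_mem _ hv' c)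
            (Subalgebra.smul_mem _ hv c')) (Subalgebra.smul_mem _ (Subalgebra.mul_mem _ hv hv') b)
        · rw [map_mul]
          simp only [smul_add, Algebra.smul_def, map_mul]
          ring
    -- a belongs to the conductor of A[y']
    have haI' : a ∈ conductorIdeal A C (Algebra.adjoin A {y'}) := by
      intro w hw
      obtain ⟨c, v, hv, rfl⟩ := key w hw
      rw [smul_add]
      refine Subalgebra.add_mem _ ?_ ?_
      · rw [Algebra.smul_def, ← map_mul]
        exact Subalgebra.algebraMap_mem _ _
      · rw [smul_smul]
        exact hab v hv
    -- the conductor of A[y'] strictly contains I, contradiction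
    have hle' : conductorIdeal A C (Algebra.adjoin A {y}) ≤
        conductorIdeal A C (Algebra.adjoin A {y'}) :=
      fun x hx w hw => hx w (hle hw)
    have hlt : conductorIdeal A C (Algebra.adjoin A {y}) <
        conductorIdeal A C (Algebra.adjoin A {y'}) :=
      lt_of_le_of_ne hle' (fun heq => ha (heq ▸ haI'))
    exact hImax _ ⟨y', hbz, rfl⟩ hlt
end

section
/- Let A ⊆ C be commutative noetherian rings with C finitely generated as an A-module. Then there exists a finite chain of intermediate rings A = A_0 ⊆ A_1 ⊆ ... ⊆ A_n = C such that for each k, the conductor ideal [A_{k-1} : A_k] is a prime ideal of A_{k-1}. -/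
/-!
Since `C` is a noetherian `A`-module, ascending chains of subalgebras of `C` stabilise, so it
suffices to find, for every proper subalgebra `B` of `C`, a strictly larger `B'` with `[B : B']`
prime. As `B` is a noetherian ring, we may take `B' ⊋ B` with `[B : B']` maximal among the
conductors of proper overrings of `B`. If `r s ∈ [B : B']` but `s ∉ [B : B']`, then
`B ⊊ B + s B' ⊆ B'`, so by maximality `[B : B + s B'] = [B : B']`; and `r` lies in the former
since `r (b + s c) = r b + (r s) c`.
-/

/-- The conductor ideal `[B₁ : B₂] = {a ∈ B₁ : a · B₂ ⊆ B₁}` of a pair of subalgebras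
of an `A`-algebra `C`, as an ideal of `B₁`. -/
def relConductor {A C : Type*} [CommRing A] [CommRing C] [Algebra A C]
    (B₁ B₂ : Subalgebra A C) : Ideal B₁ where
  carrier := {a : B₁ | ∀ b ∈ B₂, (a : C) * b ∈ B₁}
  zero_mem' := by
    intro b _
    rw [Subalgebra.coe_zero, zero_mul]
    exact Subalgebra.zero_mem _
  add_mem' := by
    intro a a' ha ha' b hb
    rw [Subalgebra.coe_add, add_mul]
    exact Subalgebra.add_mem _ (ha b hb) (ha' b hb)
  smul_mem' := by
    intro c a ha b hb
    rw [smul_eq_mul, Subalgebra.coe_mul, mul_assoc]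
    exact Subalgebra.mul_mem _ c.2 (ha b hb)

theorem WellFoundedGT.exists_chain_to_top {α : Type*} [PartialOrder α] [OrderTop α]
    [WellFoundedGT α] (P : α → α → Prop) (hP : ∀ b ≠ ⊤, ∃ b', b < b' ∧ P b b') (b : α) :
    ∃ (n : ℕ) (F : Fin (n + 1) → α), Monotone F ∧ F 0 = b ∧ F (Fin.last n) = ⊤ ∧
      ∀ k : Fin n, P (F k.castSucc) (F k.succ) := by
  induction b using WellFoundedGT.induction with
  | _ b ih =>
  by_cases hb : b = ⊤
  · exact ⟨0, fun _ => ⊤, monotone_const, hb.symm, rfl, Fin.elim0⟩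
  obtain ⟨b', hbb', hPbb'⟩ := hP b hb
  obtain ⟨n, F, hF, hF0, hFn, hFP⟩ := ih b' hbb'
  refine ⟨n + 1, Fin.cons b F, ?_, rfl, hFn, Fin.cases (by simpa [hF0]) fun k => hFP k⟩
  refine Fin.monotone_iff_le_succ.2 (Fin.cases (by simpa [hF0] using hbb'.le) fun k => ?_)
  simpa using hF k.castSucc_le_succ

instance Subalgebra.wellFoundedGT_of_isNoetherian {R A : Type*} [CommSemiring R] [Semiring A]
    [Algebra R A] [IsNoetherian R A] : WellFoundedGT (Subalgebra R A) :=
  RelHomClass.isWellFounded (⟨toSubmodule, @fun _ _ h ↦ h⟩ : _ →r (· > ·))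

instance Subalgebra.isNoetherianRing_of_finite {R A : Type*} [CommRing R] [IsNoetherianRing R]
    [CommRing A] [Algebra R A] [Module.Finite R A] (B : Subalgebra R A) : IsNoetherianRing B :=
  have : IsNoetherian R B := isNoetherian_submodule' (Subalgebra.toSubmodule B)
  isNoetherian_of_tower R inferInstance

section relConductor

variable {A C : Type*} [CommRing A] [CommRing C] [Algebra A C]

@[simp]
theorem mem_relConductor {B₁ B₂ : Subalgebra A C} {a : B₁} :
    a ∈ relConductor B₁ B₂ ↔ ∀ b ∈ B₂, (a : C) * b ∈ B₁ := Iff.rfl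

theorem relConductor_anti_right {B₁ B₂ B₂' : Subalgebra A C} (h : B₂ ≤ B₂') :
    relConductor B₁ B₂' ≤ relConductor B₁ B₂ :=
  fun _ ha b hb => ha b (h hb)

theorem relConductor_eq_top_iff {B₁ B₂ : Subalgebra A C} :
    relConductor B₁ B₂ = ⊤ ↔ B₂ ≤ B₁ := by
  simp only [Ideal.eq_top_iff_one, mem_relConductor, OneMemClass.coe_one, one_mul]
  rfl

/-- The subalgebra `B + s B'` of `B'`. -/
def addMulSubalgebra (B B' : Subalgebra A C) (hBB' : B ≤ B') {s : C} (hs : s ∈ B') :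
    Subalgebra A C where
  carrier := {x | ∃ b ∈ B, ∃ c ∈ B', x = b + s * c}
  one_mem' := ⟨1, one_mem B, 0, zero_mem B', by ring⟩
  zero_mem' := ⟨0, zero_mem B, 0, zero_mem B', by ring⟩
  add_mem' := by
    rintro x y ⟨b, hb, c, hc, rfl⟩ ⟨b', hb', c', hc', rfl⟩
    exact ⟨b + b', add_mem hb hb', c + c', add_mem hc hc', by ring⟩
  mul_mem' := by
    rintro x y ⟨b, hb, c, hc, rfl⟩ ⟨b', hb', c', hc', rfl⟩
    refine ⟨b * b', mul_mem hb hb', b * c' + c * b' + s * (c * c'), ?_, by ring⟩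
    exact add_mem (add_mem (mul_mem (hBB' hb) hc') (mul_mem hc (hBB' hb')))
      (mul_mem hs (mul_mem hc hc'))
  algebraMap_mem' r := ⟨algebraMap A C r, B.algebraMap_mem r, 0, zero_mem B', by ring⟩

section addMulSubalgebra

variable {B B' : Subalgebra A C} (hBB' : B ≤ B') {s : C} (hs : s ∈ B')

theorem le_addMulSubalgebra : B ≤ addMulSubalgebra B B' hBB' hs :=
  fun b hb => ⟨b, hb, 0, zero_mem B', by ring⟩

theorem addMulSubalgebra_le : addMulSubalgebra B B' hBB' hs ≤ B' := by
  rintro _ ⟨b, hb, c, hc, rfl⟩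
  exact add_mem (hBB' hb) (mul_mem hs hc)

theorem mul_mem_addMulSubalgebra {c : C} (hc : c ∈ B') : s * c ∈ addMulSubalgebra B B' hBB' hs :=
  ⟨0, zero_mem B, c, hc, by ring⟩

theorem mem_relConductor_addMulSubalgebra {r s : B} (hrs : r * s ∈ relConductor B B') :
    r ∈ relConductor B (addMulSubalgebra B B' hBB' (hBB' s.2)) := by
  rintro _ ⟨b, hb, c, hc, rfl⟩
  have : (r : C) * (b + s * c) = r * b + ((r * s : B) : C) * c := by push_cast; ring
  rw [this]
  exact add_mem (mul_mem r.2 hb) (hrs c hc)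

end addMulSubalgebra

theorem isPrime_relConductor_of_maximal {B B' : Subalgebra A C} (hBB' : B < B')
    (hmax : ∀ B'', B < B'' → ¬ relConductor B B' < relConductor B B'') :
    (relConductor B B').IsPrime where
  ne_top' := relConductor_eq_top_iff.not.2 (not_le_of_gt hBB')
  mem_or_mem' {r s} hrs := by
    refine or_iff_not_imp_right.2 fun hs => ?_
    obtain ⟨c, hc, hsc⟩ : ∃ c ∈ B', (s : C) * c ∉ B := by simpa using hs
    set B'' := addMulSubalgebra B B' hBB'.le (hBB'.le s.2)
    have hBB'' : B < B'' :=
      (le_addMulSubalgebra _ _).lt_of_ne fun h => hsc (h.ge (mul_mem_addMulSubalgebra _ _ hc))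
    have heq : relConductor B B' = relConductor B B'' :=
      (relConductor_anti_right (addMulSubalgebra_le _ _)).eq_of_not_lt (hmax B'' hBB'')
    exact heq ▸ mem_relConductor_addMulSubalgebra hBB'.le hrs

theorem exists_lt_isPrime_relConductor {B : Subalgebra A C} [IsNoetherianRing B] (hB : B ≠ ⊤) :
    ∃ B', B < B' ∧ (relConductor B B').IsPrime := by
  obtain ⟨B', hBB', hmax⟩ := (InvImage.wf (relConductor B) wellFounded_gt).has_min
    {B' | B < B'} ⟨⊤, hB.lt_top⟩
  exact ⟨B', hBB', isPrime_relConductor_of_maximal hBB' hmax⟩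

end relConductor

theorem stmt4_general {A C : Type*} [CommRing A] [IsNoetherianRing A] [CommRing C]
    [Algebra A C] [Module.Finite A C] :
    ∃ (n : ℕ) (F : Fin (n + 1) → Subalgebra A C), Monotone F ∧
      F 0 = ⊥ ∧ F (Fin.last n) = ⊤ ∧
      ∀ k : Fin n, (relConductor (F k.castSucc) (F k.succ)).IsPrime := by
  exact WellFoundedGT.exists_chain_to_top (fun B B' => (relConductor B B').IsPrime)
    (fun _ => exists_lt_isPrime_relConductor) ⊥

/-- Let `A ⊆ C` be commutative noetherian rings with `C` finitely generated as an
`A`-module.  Then there is a finite chain of intermediate rings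
`A = A₀ ⊆ A₁ ⊆ ⋯ ⊆ Aₙ = C` such that for each `k` the conductor ideal
`[Aₖ₋₁ : Aₖ]` is a prime ideal of `Aₖ₋₁`. -/
theorem stmt4 {A C : Type*} [CommRing A] [IsNoetherianRing A] [CommRing C]
    [IsNoetherianRing C] [Algebra A C] (hinj : Function.Injective (algebraMap A C))
    [Module.Finite A C] :
    ∃ (n : ℕ) (F : Fin (n + 1) → Subalgebra A C), Monotone F ∧
      F 0 = ⊥ ∧ F (Fin.last n) = ⊤ ∧
      ∀ k : Fin n, (relConductor (F k.castSucc) (F k.succ)).IsPrime :=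
  stmt4_general
end

section
/- An abelian group H is bounded×cobounded if H ≅ B × C with nB = 0 for some n ≥ 1 and C embeddable in a direct sum of copies of ℤ[1/m] for some m ≥ 1. Every subgroup of a bounded×cobounded abelian group is bounded×cobounded. -/
/-- The subgroup of multiples of `k`. -/
def smulSub (k : ℕ) (M : Type u) [AddCommGroup M] : AddSubgroup M where
  carrier := {x | ∃ y, x = k • y}
  zero_mem' := ⟨0, by simp⟩
  add_mem' := by
    rintro a b ⟨x, rfl⟩ ⟨y, rfl⟩
    exact ⟨x + y, by rw [smul_add]⟩
  neg_mem' := by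
    rintro a ⟨x, rfl⟩
    exact ⟨-x, by rw [smul_neg]⟩

lemma mem_smulSub {k : ℕ} {M : Type u} [AddCommGroup M] {x : M} :
    x ∈ smulSub k M ↔ ∃ y, x = k • y := Iff.rfl

lemma mem_toIntSubmodule_iff {M : Type u} [AddCommGroup M] {S : AddSubgroup M} {x : M} :
    x ∈ AddSubgroup.toIntSubmodule S ↔ x ∈ S := Iff.rfl

/-- Key splitting lemma: a pure subgroup of an abelian group of bounded exponent is a
direct summand. -/
theorem pure_compl (n : ℕ) : 0 < n → ∀ (M : Type u) [AddCommGroup M],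
    (∀ x : M, n • x = 0) → ∀ P : AddSubgroup M,
    (∀ (k : ℕ) (x : M), x ∈ P → (∃ y, x = k • y) → ∃ t ∈ P, x = k • t) →
    ∃ S : AddSubgroup M, P ⊓ S = ⊥ ∧ P ⊔ S = ⊤ := by
  induction n using Nat.strong_induction_on with
  | _ n IH =>
  intro hn M instM hbound P hpure
  by_cases h1 : n = 1
  · subst h1
    have htriv : ∀ x : M, x = 0 := fun x => by simpa using hbound x
    refine ⟨⊥, by simp, ?_⟩
    rw [sup_bot_eq]
    ext x
    simp only [AddSubgroup.mem_top, iff_true]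
    rw [htriv x]; exact zero_mem _
  · -- n has a prime factor
    set p := n.minFac with hpdef
    have hp : p.Prime := Nat.minFac_prime h1
    set q := n / p with hqdef
    have hpq : p * q = n := Nat.mul_div_cancel' n.minFac_dvd
    have hq0 : 0 < q := Nat.div_pos (Nat.minFac_le hn) hp.pos
    have hqn : q < n := Nat.div_lt_self hn hp.one_lt
    set pM : AddSubgroup M := smulSub p M with hpMdef
    -- exponent q on pM
    have hqpM : ∀ x : ↥pM, q • x = 0 := by
      rintro ⟨x, y, rfl⟩
      apply Subtype.ext
      push_cast
      rw [smul_smul, mul_comm, hpq]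
      exact hbound y
    set P' : AddSubgroup ↥pM := P.addSubgroupOf pM with hP'def
    have hpure' : ∀ (k : ℕ) (x : ↥pM), x ∈ P' → (∃ y, x = k • y) → ∃ t ∈ P', x = k • t := by
      rintro k x hx ⟨y, rfl⟩
      obtain ⟨w, hw⟩ := y.2
      have hxP : ((k • y : ↥pM) : M) ∈ P := hx
      have hxw : ((k • y : ↥pM) : M) = (k * p) • w := by
        push_cast
        rw [hw, smul_smul]
      obtain ⟨t, htP, ht⟩ := hpure (k * p) _ hxP ⟨w, hxw⟩
      refine ⟨⟨p • t, ⟨t, rfl⟩⟩, ?_, ?_⟩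
      · show (p • t : M) ∈ P
        exact nsmul_mem htP p
      · apply Subtype.ext
        push_cast at ht ⊢
        rw [ht, smul_smul]
    obtain ⟨S', hS'1, hS'2⟩ := IH q hqn hq0 ↥pM hqpM P' hpure'
    set W : AddSubgroup M := S'.map pM.subtype with hWdef
    have hWP : ∀ x : M, x ∈ W → x ∈ P → x = 0 := by
      rintro x ⟨s, hsS, rfl⟩ hxP
      have : s ∈ P' ⊓ S' := ⟨hxP, hsS⟩
      rw [hS'1] at this
      rw [AddSubgroup.mem_bot] at this
      rw [this]; rfl
    set Q := M ⧸ W with hQdef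
    set π : M →+ Q := QuotientAddGroup.mk' W with hπdef
    have hπsurj : Function.Surjective π := QuotientAddGroup.mk'_surjective W
    have hπker : ∀ x : M, π x = 0 ↔ x ∈ W := fun x => QuotientAddGroup.eq_zero_iff x
    set Pb : AddSubgroup Q := P.map π with hPbdef
    -- claim A
    have hA : ∀ x : M, ∃ t ∈ P, π (p • x) = p • π t := by
      intro x
      have hx : (⟨p • x, ⟨x, rfl⟩⟩ : ↥pM) ∈ P' ⊔ S' := by rw [hS'2]; trivial
      obtain ⟨a, haP, b, hbS, hab⟩ := AddSubgroup.mem_sup.mp hx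
      have haP' : (a : M) ∈ P := haP
      obtain ⟨ya, hya⟩ := a.2
      obtain ⟨t, htP, ht⟩ := hpure p _ haP' ⟨ya, hya⟩
      refine ⟨t, htP, ?_⟩
      have hab' : (a : M) + (b : M) = p • x := congrArg Subtype.val hab
      have hb0 : π (b : M) = 0 := (hπker _).mpr ⟨b, hbS, rfl⟩
      rw [← hab', map_add, hb0, add_zero, ht, map_nsmul]
    -- Omega
    set Ω : AddSubgroup Q := {
      carrier := {x | p • x = 0}
      zero_mem' := by simp
      add_mem' := by
        intro a b ha hb
        simp only [Set.mem_setOf_eq, smul_add] at *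
        rw [ha, hb, add_zero]
      neg_mem' := by
        intro a ha
        simp only [Set.mem_setOf_eq, smul_neg] at *
        rw [ha, neg_zero] } with hΩdef
    have hmemΩ : ∀ x : Q, x ∈ Ω ↔ p • x = 0 := fun _ => Iff.rfl
    haveI : Fact p.Prime := ⟨hp⟩
    haveI instΩ : Module (ZMod p) ↥Ω := AddCommGroup.zmodModule (by
      rintro ⟨x, hx⟩
      apply Subtype.ext
      push_cast
      exact hx)
    set V' : Submodule (ZMod p) ↥Ω := AddSubgroup.toZModSubmodule p (Pb.addSubgroupOf Ω)
      with hV'def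
    obtain ⟨U', hU'⟩ := V'.exists_isCompl
    set U : AddSubgroup Q := U'.toAddSubgroup.map Ω.subtype with hUdef
    have hPU0 : ∀ x : Q, x ∈ Pb → x ∈ U → x = 0 := by
      rintro x hxP ⟨u, huU, rfl⟩
      have huV : u ∈ V' := by
        show u ∈ AddSubgroup.toZModSubmodule p (Pb.addSubgroupOf Ω)
        rw [AddSubgroup.mem_toZModSubmodule]
        exact AddSubgroup.mem_addSubgroupOf.mpr hxP
      have huU' : u ∈ U' := (Submodule.mem_toAddSubgroup U').mp huU
      have hu0 : u ∈ V' ⊓ U' := Submodule.mem_inf.mpr ⟨huV, huU'⟩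
      rw [hU'.inf_eq_bot, Submodule.mem_bot] at hu0
      rw [hu0, map_zero]
    have hPUtop : ∀ x : Q, ∃ t ∈ Pb, ∃ u ∈ U, x = t + u := by
      intro xq
      obtain ⟨x, rfl⟩ := hπsurj xq
      obtain ⟨t, htP, ht⟩ := hA x
      have hω : π x - π t ∈ Ω := by
        rw [hmemΩ, smul_sub, ← map_nsmul, ht, sub_self]
      have hmemsup : (⟨π x - π t, hω⟩ : ↥Ω) ∈ V' ⊔ U' := by
        rw [hU'.sup_eq_top]; exact Submodule.mem_top
      obtain ⟨v, hv, u, hu, hvu⟩ := Submodule.mem_sup.mp hmemsup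
      have hvu' : (v : Q) + (u : Q) = π x - π t := congrArg Subtype.val hvu
      have hvP : (v : Q) ∈ Pb := by
        have hv2 : v ∈ AddSubgroup.toZModSubmodule p (Pb.addSubgroupOf Ω) := hv
        rw [AddSubgroup.mem_toZModSubmodule] at hv2
        exact AddSubgroup.mem_addSubgroupOf.mp hv2
      refine ⟨π t + (v : Q), ?_, (u : Q), ⟨u, (Submodule.mem_toAddSubgroup U').mpr hu, rfl⟩, ?_⟩
      · exact add_mem ⟨t, htP, rfl⟩ hvP
      · rw [add_assoc, hvu']
        abel
    set S : AddSubgroup M := U.comap π with hSdef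
    refine ⟨S, ?_, ?_⟩
    · rw [eq_bot_iff]
      rintro x ⟨hxP, hxS⟩
      have hπx : π x = 0 := hPU0 _ ⟨x, hxP, rfl⟩ hxS
      rw [AddSubgroup.mem_bot]
      exact hWP x ((hπker x).mp hπx) hxP
    · rw [eq_top_iff]
      rintro x -
      obtain ⟨tb, htb, u, hu, hxtu⟩ := hPUtop (π x)
      obtain ⟨t, htP, rfl⟩ := htb
      have : x - t ∈ S := by
        show π (x - t) ∈ U
        rw [map_sub, hxtu]
        simpa using hu
      have hx : t + (x - t) = x := by abel
      exact AddSubgroup.mem_sup.mpr ⟨t, htP, x - t, this, hx⟩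

/-- An abelian group is bounded if it is annihilated by some positive integer. -/
def IsBoundedGroup (B : Type u) [AddCommGroup B] : Prop :=
  ∃ n : ℕ, 0 < n ∧ ∀ x : B, n • x = 0

/-- An abelian group is cobounded if, for some `n ≥ 1`, it embeds into a direct sum of
copies of `ℤ[1/n]`. -/
def IsCoboundedGroup (C : Type u) [AddCommGroup C] : Prop :=
  ∃ n : ℕ, 0 < n ∧ ∃ (ι : Type u) (f : C →+ (ι →₀ Localization.Away (n : ℤ))),
    Function.Injective f

/-- An abelian group is bounded×cobounded if it is isomorphic to the product of a
bounded group and a cobounded group. -/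
def IsBoundedCobounded (G : Type u) [AddCommGroup G] : Prop :=
  ∃ (B C : Type u) (_ : AddCommGroup B) (_ : AddCommGroup C),
    IsBoundedGroup B ∧ IsCoboundedGroup C ∧ Nonempty (G ≃+ B × C)

/-- Every subgroup of a bounded×cobounded abelian group is bounded×cobounded. -/
theorem stmt6 {G : Type u} [AddCommGroup G] (h : IsBoundedCobounded G)
    (H : AddSubgroup G) : IsBoundedCobounded (↥H) := by
  obtain ⟨B, C, instB, instC, ⟨n, hn, hB⟩, ⟨m, hm, ι, f, hf⟩, ⟨e⟩⟩ := h
  -- the coefficient ring is a torsion-free group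
  have hle : Submonoid.powers (m : ℤ) ≤ nonZeroDivisors ℤ :=
    powers_le_nonZeroDivisors_of_noZeroDivisors (by exact_mod_cast hm.ne')
  haveI : IsDomain (Localization.Away (m : ℤ)) := IsLocalization.isDomain_localization hle
  haveI : CharZero (Localization.Away (m : ℤ)) :=
    charZero_of_injective_algebraMap (IsLocalization.injective (Localization.Away (m : ℤ)) hle)
  have tfR : ∀ (a : Localization.Away (m : ℤ)) (k : ℕ), k ≠ 0 → k • a = 0 → a = 0 := by
    intro a k hk hka
    rw [nsmul_eq_mul] at hka
    rcases mul_eq_zero.mp hka with h0 | h0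
    · exact absurd (Nat.cast_eq_zero.mp h0) hk
    · exact h0
  have tfC : ∀ (c : C) (k : ℕ), k ≠ 0 → k • c = 0 → c = 0 := by
    intro c k hk hkc
    apply hf
    rw [map_zero]
    ext i
    have h2 : k • ((f c) i) = 0 := by
      have h3 : ((Finsupp.applyAddHom i).comp f) (k • c) = 0 := by
        rw [hkc, map_zero]
      rw [map_nsmul] at h3
      simpa using h3
    simpa using tfR _ k hk h2
  -- the torsion subgroup of H
  set φ : ↥H →+ C := (AddMonoidHom.snd B C).comp (e.toAddMonoidHom.comp H.subtype) with hφdef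
  set P : AddSubgroup ↥H := φ.ker with hPdef
  have hmemP : ∀ x : ↥H, x ∈ P ↔ φ x = 0 := fun _ => AddMonoidHom.mem_ker
  have hPbound : ∀ x : ↥H, x ∈ P → n • x = 0 := by
    intro x hx
    have hφx : (e ↑x).2 = 0 := (hmemP x).mp hx
    have h1 : e (n • (↑x : G)) = 0 := by
      rw [map_nsmul]
      have : n • e ↑x = (n • (e ↑x).1, n • (e ↑x).2) := rfl
      rw [this, hB, hφx, smul_zero]
      rfl
    have h2 : (n • (↑x : G)) = 0 := by
      apply e.injective
      rw [h1, map_zero]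
    exact Subtype.ext (by push_cast; exact h2)
  have hsat : ∀ (k : ℕ), k ≠ 0 → ∀ x : ↥H, k • x ∈ P → x ∈ P := by
    intro k hk x hkx
    rw [hmemP] at hkx ⊢
    rw [map_nsmul] at hkx
    exact tfC _ k hk hkx
  have hpure : ∀ (k : ℕ) (x : ↥H), x ∈ P → (∃ y, x = k • y) → ∃ t ∈ P, x = k • t := by
    rintro k x hx ⟨y, rfl⟩
    rcases Nat.eq_zero_or_pos k with rfl | hk
    · exact ⟨0, zero_mem _, by simp⟩
    · exact ⟨y, hsat k hk.ne' y hx, rfl⟩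
  -- quotient by n • H
  set N : AddSubgroup ↥H := smulSub n ↥H with hNdef
  have hPN : ∀ x : ↥H, x ∈ P → x ∈ N → x = 0 := by
    rintro x hxP ⟨y, rfl⟩
    exact hPbound y (hsat n hn.ne' y hxP)
  set Q := ↥H ⧸ N with hQdef
  set π : ↥H →+ Q := QuotientAddGroup.mk' N with hπdef
  have hπsurj : Function.Surjective π := QuotientAddGroup.mk'_surjective N
  have hπker : ∀ x : ↥H, π x = 0 ↔ x ∈ N := fun x => QuotientAddGroup.eq_zero_iff x
  have hQbound : ∀ x : Q, n • x = 0 := by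
    intro xq
    obtain ⟨x, rfl⟩ := hπsurj xq
    have h1 : π (n • x) = 0 := (hπker _).mpr ⟨x, rfl⟩
    rw [map_nsmul] at h1
    exact h1
  set Pb : AddSubgroup Q := P.map π with hPbdef
  have hpureQ : ∀ (k : ℕ) (x : Q), x ∈ Pb → (∃ y, x = k • y) → ∃ t ∈ Pb, x = k • t := by
    rintro k x hx ⟨y, hy⟩
    rcases Nat.eq_zero_or_pos k with rfl | hk
    · refine ⟨0, zero_mem _, by simpa using hy⟩
    · obtain ⟨t₀, ht₀P, rfl⟩ := hx
      obtain ⟨y₀, rfl⟩ := hπsurj y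
      have hdiff : t₀ - k • y₀ ∈ N := by
        rw [← hπker, map_sub, map_nsmul, hy, sub_self]
      obtain ⟨z, hz⟩ := hdiff
      have ht₀ : t₀ = k • y₀ + n • z := by rw [← hz]; abel
      set g := Nat.gcd k n with hgdef
      have hg0 : 0 < g := Nat.gcd_pos_of_pos_left n hk
      obtain ⟨k₁, hk1⟩ : g ∣ k := Nat.gcd_dvd_left k n
      obtain ⟨n₁, hn1⟩ : g ∣ n := Nat.gcd_dvd_right k n
      set w : ↥H := k₁ • y₀ + n₁ • z with hwdef
      have hgw : t₀ = g • w := by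
        rw [hwdef, smul_add, smul_smul, smul_smul, ← hk1, ← hn1, ht₀]
      have hwP : w ∈ P := hsat g hg0.ne' w (hgw ▸ ht₀P)
      set a := Nat.gcdA k n with hadef
      set b := Nat.gcdB k n with hbdef
      have hbez : (g : ℤ) = k * a + n * b := Nat.gcd_eq_gcd_ab k n
      have hnw : ∀ v : ↥H, v ∈ P → (n : ℤ) • v = 0 := fun v hv => by
        rw [natCast_zsmul]; exact hPbound v hv
      have ht₀2 : t₀ = k • (a • w) := by
        have h1 : t₀ = (g : ℤ) • w := by rw [hgw, natCast_zsmul]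
        rw [h1, hbez, add_zsmul, mul_zsmul, mul_zsmul,
          hnw (b • w) (zsmul_mem hwP b), add_zero, natCast_zsmul]
      refine ⟨π (a • w), ⟨a • w, zsmul_mem hwP a, rfl⟩, ?_⟩
      rw [ht₀2, map_nsmul]
  obtain ⟨Sb, hSb1, hSb2⟩ := pure_compl n hn Q hQbound Pb hpureQ
  set S : AddSubgroup ↥H := Sb.comap π with hSdef
  have hPS1 : P ⊓ S = ⊥ := by
    rw [eq_bot_iff]
    rintro x ⟨hxP, hxS⟩
    have hπx : π x ∈ Pb ⊓ Sb := ⟨⟨x, hxP, rfl⟩, hxS⟩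
    rw [hSb1, AddSubgroup.mem_bot] at hπx
    rw [AddSubgroup.mem_bot]
    exact hPN x hxP ((hπker x).mp hπx)
  have hPS2 : P ⊔ S = ⊤ := by
    rw [eq_top_iff]
    rintro x -
    have : π x ∈ Pb ⊔ Sb := by rw [hSb2]; trivial
    obtain ⟨tb, htb, u, hu, hxtu⟩ := AddSubgroup.mem_sup.mp this
    obtain ⟨t, htP, rfl⟩ := htb
    have hxts : x - t ∈ S := by
      show π (x - t) ∈ Sb
      rw [map_sub, ← hxtu]
      simpa using hu
    exact AddSubgroup.mem_sup.mpr ⟨t, htP, x - t, hxts, by abel⟩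
  -- assemble the isomorphism
  set P' : Submodule ℤ ↥H := AddSubgroup.toIntSubmodule P with hP'def
  set S' : Submodule ℤ ↥H := AddSubgroup.toIntSubmodule S with hS'def
  have hcompl : IsCompl P' S' := by
    constructor
    · rw [disjoint_iff, eq_bot_iff]
      rintro x ⟨hx1, hx2⟩
      have : x ∈ P ⊓ S := ⟨hx1, hx2⟩
      rw [hPS1, AddSubgroup.mem_bot] at this
      rw [Submodule.mem_bot]
      exact this
    · rw [codisjoint_iff, eq_top_iff]
      rintro x -
      have : x ∈ P ⊔ S := by rw [hPS2]; trivial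
      obtain ⟨y, hy, z, hz, hyz⟩ := AddSubgroup.mem_sup.mp this
      exact Submodule.mem_sup.mpr ⟨y, hy, z, hz, hyz⟩
  set eqH : (↥P' × ↥S') ≃ₗ[ℤ] ↥H := Submodule.prodEquivOfIsCompl P' S' hcompl with heqdef
  refine ⟨↥P', ↥S', inferInstance, inferInstance, ?_, ?_, ⟨eqH.symm.toAddEquiv⟩⟩
  · refine ⟨n, hn, ?_⟩
    rintro ⟨x, hx⟩
    exact Subtype.ext (by push_cast; exact hPbound x hx)
  · refine ⟨m, hm, ι, f.comp (φ.comp ((Submodule.subtype S').toAddMonoidHom)), ?_⟩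
    intro x y hxy
    simp only [AddMonoidHom.comp_apply] at hxy
    have h1 : φ (↑x - ↑y) = 0 := by
      rw [map_sub, sub_eq_zero]
      exact hf hxy
    have h2 : ((↑x - ↑y : ↥H)) ∈ P ⊓ S := by
      refine ⟨(hmemP _).mpr h1, ?_⟩
      have hxS : (x : ↥H) ∈ S := mem_toIntSubmodule_iff.mp x.2
      have hyS : (y : ↥H) ∈ S := mem_toIntSubmodule_iff.mp y.2
      exact S.sub_mem hxS hyS
    rw [hPS1, AddSubgroup.mem_bot, sub_eq_zero] at h2
    exact Subtype.ext h2
end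

section
/- Let G be an abelian group that is bounded×cobounded, and let H be a finitely generated subgroup of G. Then the torsion subgroup of G/H is supported at a finite set of primes; that is, there are only finitely many primes p such that G/H has a nontrivial element of order p. -/
open Submodule

def torsionPrimes (A : Type*) [AddCommGroup A] : Set ℕ :=
  {p | p.Prime ∧ ∃ x : A, x ≠ 0 ∧ addOrderOf x = p}

section TorsionPrimes

variable {A B : Type*} [AddCommGroup A] [AddCommGroup B]

theorem mem_torsionPrimes {p : ℕ} :
    p ∈ torsionPrimes A ↔ p.Prime ∧ ∃ x : A, x ≠ 0 ∧ p • x = 0 := by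
  refine and_congr_right fun hp => exists_congr fun x => and_congr_right fun hx => ?_
  have := Fact.mk hp
  exact ⟨fun h => h ▸ addOrderOf_nsmul_eq_zero x, fun h => addOrderOf_eq_prime h hx⟩

theorem torsionPrimes_subset_primeFactors {n : ℕ} (hn : n ≠ 0)
    (h : ∀ x : A, IsOfFinAddOrder x → ∃ k, n ^ k • x = 0) :
    torsionPrimes A ⊆ n.primeFactors := by
  rintro p ⟨hp, x, -, hx⟩
  obtain ⟨k, hk⟩ := h x (addOrderOf_pos_iff.1 (hx ▸ hp.pos))
  exact Nat.mem_primeFactors.2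
    ⟨hp, hp.dvd_of_dvd_pow (hx ▸ addOrderOf_dvd_of_nsmul_eq_zero hk), hn⟩

theorem torsionPrimes_subset_ker_union (f : A →+ B) :
    torsionPrimes A ⊆ torsionPrimes f.ker ∪ torsionPrimes B := by
  intro p hp
  obtain ⟨hp, x, hx, hpx⟩ := mem_torsionPrimes.1 hp
  by_cases hfx : f x = 0
  · exact .inl <|
      mem_torsionPrimes.2 ⟨hp, ⟨x, hfx⟩, mt Subtype.ext_iff.1 hx, Subtype.ext hpx⟩
  · exact .inr <| mem_torsionPrimes.2 ⟨hp, f x, hfx, by rw [← map_nsmul, hpx, map_zero]⟩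

theorem torsionPrimes_quotient_subset (f : A →+ B) {H : AddSubgroup A} {H' : AddSubgroup B}
    (hHH' : H ≤ H'.comap f) {n : ℕ} (hn : n ≠ 0) (hf : ∀ a, f a ∈ H' → ∃ k, n ^ k • a ∈ H) :
    torsionPrimes (A ⧸ H) ⊆ n.primeFactors ∪ torsionPrimes (B ⧸ H') := by
  refine (torsionPrimes_subset_ker_union (QuotientAddGroup.map H H' f hHH')).trans
    (Set.union_subset_union_left _ (torsionPrimes_subset_primeFactors hn ?_))
  rintro ⟨x, hx⟩ -
  induction x using QuotientAddGroup.induction_on with | H a => ?_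
  obtain ⟨k, hk⟩ := hf a ((QuotientAddGroup.eq_zero_iff _).1 hx)
  exact ⟨k, Subtype.ext ((QuotientAddGroup.eq_zero_iff _).2 hk)⟩

theorem AddSubgroup.nsmul_mem_of_apply_mem_map {f : A →+ B} {n : ℕ}
    (hf : ∀ a, f a = 0 → n • a = 0) {H : AddSubgroup A} {a : A} (ha : f a ∈ H.map f) :
    n • a ∈ H := by
  obtain ⟨b, hb, hba⟩ := ha
  have hab : n • a = n • b := sub_eq_zero.1 <| by
    rw [← nsmul_sub]
    exact hf _ (by rw [map_sub, hba, sub_self])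
  exact hab ▸ nsmul_mem hb n

theorem torsionPrimes_quotient_finite_of_map {f : A →+ B} {n : ℕ} (hn : n ≠ 0)
    (hf : ∀ a, f a = 0 → n • a = 0) {H : AddSubgroup A}
    (hH : (torsionPrimes (B ⧸ H.map f)).Finite) : (torsionPrimes (A ⧸ H)).Finite :=
  (n.primeFactors.finite_toSet.union hH).subset <|
    torsionPrimes_quotient_subset f (H.le_comap_map f) hn fun _ ha =>
      ⟨1, (pow_one n).symm ▸ H.nsmul_mem_of_apply_mem_map hf ha⟩

theorem AddSubgroup.FG.map {H : AddSubgroup A} (hH : H.FG) (f : A →+ B) : (H.map f).FG :=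
  (AddSubgroup.fg_iff_addSubmonoid_fg _).2 (((AddSubgroup.fg_iff_addSubmonoid_fg H).1 hH).map f)

end TorsionPrimes

theorem torsionPrimes_quotient_subset_of_pure {R M : Type*} [CommRing R] [AddCommGroup M]
    [Module R M] {N D : Submodule R M} (hND : N ≤ D)
    (hD : ∀ (p : ℕ) (y : M), p.Prime → p • y ∈ D → y ∈ D) :
    torsionPrimes (M ⧸ N.toAddSubgroup) ⊆ torsionPrimes (D ⧸ N.comap D.subtype) := by
  intro p hp
  obtain ⟨hp, x, hx, hpx⟩ := mem_torsionPrimes.1 hp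
  induction x using QuotientAddGroup.induction_on with | H y => ?_
  rw [Ne, QuotientAddGroup.eq_zero_iff] at hx
  rw [← QuotientAddGroup.mk_nsmul, QuotientAddGroup.eq_zero_iff] at hpx
  refine mem_torsionPrimes.2 ⟨hp, Submodule.Quotient.mk ⟨y, hD p y hp (hND hpx)⟩, ?_, ?_⟩
  · rwa [Ne, Submodule.Quotient.mk_eq_zero]
  · rwa [← Submodule.Quotient.mk_smul, Submodule.Quotient.mk_eq_zero]

theorem Finsupp.nsmul_mem_supported_iff {ι R M : Type*} [Semiring R] [AddCommMonoid M]
    [Module R M] [IsAddTorsionFree M] {s : Set ι} {n : ℕ} (hn : n ≠ 0) {y : ι →₀ M} :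
    n • y ∈ supported M R s ↔ y ∈ supported M R s := by
  simp [Finsupp.mem_supported', hn]

theorem AddSubgroup.FG.span_fg {R M : Type*} [Semiring R] [AddCommGroup M]
    [Module R M] {K : AddSubgroup M} (hK : K.FG) : (span R (K : Set M)).FG := by
  obtain ⟨s, hs⟩ := (AddSubgroup.fg_iff_addSubmonoid_fg K).1 hK
  exact ⟨s, by rw [← span_closure, hs]; rfl⟩

section LocalizationAway

-- `Localization.Away` carries its own `ℤ`-algebra structure, not `algebraInt`.
variable {R : Type*} [CommRing R] [Algebra ℤ R]

theorem exists_pow_nsmul_mem_of_mem_span (m : ℕ) [IsLocalization.Away (m : ℤ) R]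
    {M : Type*} [AddCommGroup M] [Module R M] {K : AddSubgroup M} {y : M}
    (hy : y ∈ span R (K : Set M)) : ∃ k, m ^ k • y ∈ K := by
  induction hy using span_induction with
  | mem y hy => exact ⟨0, by simpa using hy⟩
  | zero => exact ⟨0, by simp⟩
  | add y z _ _ hy hz =>
    obtain ⟨k, hk⟩ := hy
    obtain ⟨l, hl⟩ := hz
    refine ⟨k + l, ?_⟩
    have := add_mem (nsmul_mem hk (m ^ l)) (nsmul_mem hl (m ^ k))
    rwa [← mul_smul, ← mul_smul, ← pow_add, ← pow_add, add_comm l k, ← smul_add] at this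
  | smul r y _ hy =>
    obtain ⟨k, hk⟩ := hy
    obtain ⟨t, a, hr⟩ := IsLocalization.Away.surj (m : ℤ) r
    refine ⟨t + k, ?_⟩
    have : m ^ (t + k) • r • y = a • m ^ k • y := by
      rw [pow_add, mul_smul, smul_comm (m ^ k), ← Nat.cast_smul_eq_nsmul R (m ^ t), smul_smul,
        mul_comm, ← Int.cast_natCast, ← eq_intCast (algebraMap ℤ R), Nat.cast_pow, map_pow, hr,
        eq_intCast, Int.cast_smul_eq_zsmul]
    exact this ▸ zsmul_mem hk a

variable [IsDomain R] [IsNoetherianRing R] [CharZero R]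

theorem Module.Finite.torsionPrimes_finite (m : ℕ) [IsLocalization.Away (m : ℤ) R]
    {N : Type*} [AddCommGroup N] [Module R N] [Module.Finite R N] : (torsionPrimes N).Finite := by
  obtain ⟨d, hd_ann, hd_nzd⟩ :=
    annihilator_top_inter_nonZeroDivisors (torsion_isTorsion (R := R) (M := N))
  obtain ⟨t, a, hda⟩ := IsLocalization.Away.surj (m : ℤ) d
  have ha : a ≠ 0 := by
    rintro rfl
    rw [map_zero] at hda
    exact mul_ne_zero (nonZeroDivisors.ne_zero hd_nzd)
      (pow_ne_zero t (IsLocalization.Away.algebraMap_isUnit (m : ℤ)).ne_zero) hda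
  refine a.natAbs.primeFactors.finite_toSet.subset
    (torsionPrimes_subset_primeFactors (Int.natAbs_ne_zero.2 ha) fun x hx => ⟨1, ?_⟩)
  obtain ⟨n, hn, hnx⟩ := hx.exists_nsmul_eq_zero
  have hxT : x ∈ torsion R N := (mem_torsion_iff x).2
    ⟨⟨n, mem_nonZeroDivisors_of_ne_zero (Nat.cast_ne_zero.2 hn.ne')⟩,
      by rwa [Submonoid.smul_def, Nat.cast_smul_eq_nsmul]⟩
  have hdx : d • x = 0 :=
    congrArg Subtype.val (Submodule.mem_annihilator.1 hd_ann ⟨x, hxT⟩ trivial)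
  rw [pow_one, natAbs_nsmul_eq_zero, ← Int.cast_smul_eq_zsmul R, ← eq_intCast (algebraMap ℤ R),
    ← hda, mul_comm, mul_smul, hdx, smul_zero]

theorem torsionPrimes_finsupp_quotient_submodule_finite (m : ℕ) [IsLocalization.Away (m : ℤ) R]
    {ι : Type*} {N : Submodule R (ι →₀ R)} (hN : N.FG) :
    (torsionPrimes ((ι →₀ R) ⧸ N.toAddSubgroup)).Finite := by
  classical
  obtain ⟨s, rfl⟩ := hN
  let D := Finsupp.supported R R (↑(s.sup Finsupp.support) : Set ι)
  have hsD : span R ↑s ≤ D := span_le.2 fun y hy =>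
    (Finsupp.mem_supported R y).2 (Finset.coe_subset.2 (Finset.le_sup hy))
  have : Module.Finite R D := Module.Finite.equiv (Finsupp.supportedEquivFinsupp _).symm
  exact (Module.Finite.torsionPrimes_finite (R := R) m).subset <|
    torsionPrimes_quotient_subset_of_pure hsD
    fun p y hp => (Finsupp.nsmul_mem_supported_iff hp.ne_zero).1

theorem torsionPrimes_finsupp_quotient_finite (m : ℕ) [IsLocalization.Away (m : ℤ) R]
    {ι : Type*} {K : AddSubgroup (ι →₀ R)} (hK : K.FG) : (torsionPrimes ((ι →₀ R) ⧸ K)).Finite := by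
  have hm : m ≠ 0 := by
    rintro rfl
    simpa using IsLocalization.Away.algebraMap_isUnit (S := R) (0 : ℤ)
  exact (m.primeFactors.finite_toSet.union
    (torsionPrimes_finsupp_quotient_submodule_finite m (hK.span_fg (R := R)))).subset
    (torsionPrimes_quotient_subset (AddMonoidHom.id _) subset_span hm
      fun _ => exists_pow_nsmul_mem_of_mem_span m)

end LocalizationAway

section IntLocalizationAway

variable (m : ℕ) [NeZero m]

theorem Int.powers_natCast_le_nonZeroDivisors :
    Submonoid.powers (m : ℤ) ≤ nonZeroDivisors ℤ :=
  powers_le_nonZeroDivisors_of_noZeroDivisors (Int.natCast_ne_zero.2 (NeZero.ne m))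

instance : IsDomain (Localization.Away (m : ℤ)) :=
  IsLocalization.isDomain_localization (Int.powers_natCast_le_nonZeroDivisors m)

instance : CharZero (Localization.Away (m : ℤ)) :=
  charZero_of_injective_algebraMap <|
    IsLocalization.injective _ (Int.powers_natCast_le_nonZeroDivisors m)

end IntLocalizationAway

/-- If `G` is a bounded×cobounded abelian group and `H` a finitely generated subgroup,
then the torsion of `G/H` is supported at finitely many primes. -/
theorem stmt10 {G : Type u} [AddCommGroup G] (h : IsBoundedCobounded G)
    (H : AddSubgroup G) (hH : H.FG) :
    {p : ℕ | p.Prime ∧ ∃ x : G ⧸ H, x ≠ 0 ∧ addOrderOf x = p}.Finite := by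
  obtain ⟨B, C, _, _, ⟨n, hn, hB⟩, ⟨m, hm, ι, f, hf⟩, ⟨e⟩⟩ := h
  have : NeZero m := ⟨hm.ne'⟩
  let φ : G →+ (ι →₀ Localization.Away (m : ℤ)) := f.comp ((AddMonoidHom.snd B C).comp e)
  have hφ : ∀ a, φ a = 0 → n • a = 0 := fun a ha => e.injective <| by
    have hC : (e a).2 = 0 := hf (ha.trans f.map_zero.symm)
    rw [map_nsmul, map_zero]
    exact Prod.ext (by rw [Prod.smul_fst, hB]; rfl) (by rw [Prod.smul_snd, hC, smul_zero]; rfl)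
  -- Naming `B` lets its `AddCommGroup` instance be synthesized before `φ` is unified.
  exact torsionPrimes_quotient_finite_of_map (B := ι →₀ Localization.Away (m : ℤ)) hn.ne' hφ
    (torsionPrimes_finsupp_quotient_finite m (hH.map φ))
end

section
/- Let K be a finitely generated field extension of the finite field F_p. Then there exists a constant c such that for every m ∈ ℕ and every finite field extension L of K with [L:K] ≤ m, the number of roots of unity in L is at most c^m. -/
/-!
Let `E` be the algebraic closure of `𝔽_p` in `K`. If `x` in an extension `L/K` is algebraic
over `𝔽_p`, the coefficients of its minimal polynomial over `K` are algebraic too, hence lie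
in `E`, so `x` has degree at most `[L:K]` over `E`. Every finite subextension of `L/E` is
simple, so it has at most `|E| ^ [L:K]` elements; as roots of unity are algebraic over `𝔽_p`,
this bounds their number. The same bound, applied to `M⟮x⟯/M` with `x` algebraic, shows by
induction on generators that `E` is finite: adjoining a transcendental element creates no new
algebraic elements.
-/

open Polynomial IntermediateField

theorem Set.encard_le_of_forall_finite_subset {α : Type*} {s : Set α} {N : ℕ}
    (h : ∀ t ⊆ s, t.Finite → t.encard ≤ N) : s.encard ≤ N := by
  by_contra! hlt
  obtain ⟨t, hts, ht⟩ := Set.exists_subset_encard_eq (Order.add_one_le_of_lt hlt)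
  have htfin : t.Finite := Set.finite_of_encard_eq_coe ht
  exact absurd (ht ▸ h t hts htfin) (by exact_mod_cast Nat.not_succ_le_self N)

theorem coeff_minpoly_mem_algebraicClosure {F K L : Type*} [Field F] [Field K] [Field L]
    [Algebra F K] [Algebra K L] [Algebra F L] [IsScalarTower F K L]
    {x : L} (hx : IsIntegral F x) (n : ℕ) : (minpoly K x).coeff n ∈ algebraicClosure F K := by
  have hdvd : minpoly K x ∣ (minpoly F x).map (algebraMap F K) :=
    minpoly.dvd K x (by rw [aeval_map_algebraMap, minpoly.aeval])
  obtain ⟨c, hc⟩ := lifts_iff_coeff_lifts _ |>.mp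
    (integralClosure.mem_lifts_of_monic_of_dvd_map K (minpoly.monic hx)
      (minpoly.monic hx.tower_top) hdvd) n
  rw [← hc, mem_algebraicClosure_iff']
  exact c.2

theorem algebraicClosure_adjoin_simple_eq_bot {K E : Type*} [Field K] [Field E]
    [Algebra K E] {x : E} (hx : Transcendental K x) : algebraicClosure K K⟮x⟯ = ⊥ := by
  refine eq_bot_iff.mpr fun y hy => mem_bot.mpr ?_
  set e := RatFunc.algEquivOfTranscendental x hx
  by_cases hc : ∃ c, e.symm y = RatFunc.C c
  · obtain ⟨c, hc⟩ := hc
    refine ⟨c, e.symm.injective ?_⟩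
    rw [hc, AlgEquiv.commutes, RatFunc.algebraMap_eq_C]
  · exact absurd ((mem_algebraicClosure_iff.mp hy).algHom e.symm.toAlgHom)
      (RatFunc.transcendental_of_ne_C _ hc)

theorem finrank_le_of_forall_natDegree_minpoly_le {T L : Type*} [Field T] [Finite T] [Field L]
    [Algebra T L] [FiniteDimensional T L] {m : ℕ}
    (h : ∀ x : L, (minpoly T x).natDegree ≤ m) : Module.finrank T L ≤ m := by
  obtain ⟨α, hα⟩ := Field.exists_primitive_element_of_finite_bot T L
  calc Module.finrank T L = Module.finrank T T⟮α⟯ := by rw [hα, finrank_top']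
    _ = (minpoly T α).natDegree := adjoin.finrank (.of_finite T α)
    _ ≤ m := h α

theorem encard_setOf_isIntegral_le_of_natDegree_minpoly_le {T L : Type*} [Field T] [Finite T]
    [Field L] [Algebra T L] {m : ℕ}
    (h : ∀ x : L, IsIntegral T x → (minpoly T x).natDegree ≤ m) :
    {x : L | IsIntegral T x}.encard ≤ (Nat.card T ^ m : ℕ) := by
  refine Set.encard_le_of_forall_finite_subset fun t ht htfin => ?_
  have : Finite t := htfin
  set M := adjoin T t
  have : FiniteDimensional T M := finiteDimensional_adjoin ht
  have : Finite M := Module.finite_of_finite T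
  have hM : Module.finrank T M ≤ m := finrank_le_of_forall_natDegree_minpoly_le fun y => by
    rw [← minpoly.algebraMap_eq (algebraMap M L).injective]
    exact h _ (IsIntegral.algebraMap (.of_finite T y))
  calc t.encard ≤ (M : Set L).encard := Set.encard_le_encard (subset_adjoin T t)
    _ = Nat.card M := ENat.card_eq_coe_natCard M
    _ = (Nat.card T ^ Module.finrank T M : ℕ) := by rw [Module.natCard_eq_pow_finrank (K := T)]
    _ ≤ (Nat.card T ^ m : ℕ) := by gcongr; exact Nat.card_pos

theorem natDegree_minpoly_algebraicClosure_le_finrank {F K L : Type*} [Field F] [Field K]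
    [Field L] [Algebra F K] [Algebra K L] [Algebra F L] [IsScalarTower F K L]
    [FiniteDimensional K L] {x : L} (hx : IsIntegral F x) :
    (minpoly (algebraicClosure F K) x).natDegree ≤ Module.finrank K L := by
  have hlifts : minpoly K x ∈ lifts (algebraMap (algebraicClosure F K) K) :=
    (lifts_iff_coeff_lifts _).mpr fun n =>
      ⟨⟨_, coeff_minpoly_mem_algebraicClosure hx n⟩, rfl⟩
  obtain ⟨q, hq, hdeg, hmonic⟩ :=
    lifts_and_degree_eq_and_monic hlifts (minpoly.monic hx.tower_top)
  have hqx : aeval x q = 0 := by rw [← aeval_map_algebraMap K, hq, minpoly.aeval]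
  calc (minpoly (algebraicClosure F K) x).natDegree ≤ q.natDegree :=
        natDegree_le_of_dvd (minpoly.dvd _ x hqx) hmonic.ne_zero
    _ = (minpoly K x).natDegree := by rw [natDegree_eq_of_degree_eq hdeg]
    _ ≤ Module.finrank K L := minpoly.natDegree_le x

theorem encard_setOf_isIntegral_le {F K L : Type*} [Field F] [Field K]
    [Field L] [Algebra F K] [Algebra K L] [Algebra F L] [IsScalarTower F K L]
    [FiniteDimensional K L] [Finite (algebraicClosure F K)] :
    {x : L | IsIntegral F x}.encard ≤
      (Nat.card (algebraicClosure F K) ^ Module.finrank K L : ℕ) := by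
  refine le_trans (Set.encard_le_encard fun x hx => IsIntegral.tower_top hx) <|
    encard_setOf_isIntegral_le_of_natDegree_minpoly_le fun x hx => ?_
  exact natDegree_minpoly_algebraicClosure_le_finrank (isIntegral_trans x hx)

theorem finite_algebraicClosure_adjoin_simple {F M E : Type*} [Field F] [Field M] [Field E]
    [Algebra F M] [Algebra M E] [Algebra F E] [IsScalarTower F M E] (x : E)
    [Finite (algebraicClosure F M)] : Finite (algebraicClosure F M⟮x⟯) := by
  by_cases hx : IsAlgebraic M x
  · have : FiniteDimensional M M⟮x⟯ := adjoin.finiteDimensional hx.isIntegral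
    have hfin : {y : M⟮x⟯ | IsIntegral F y}.Finite :=
      Set.finite_of_encard_le_coe (encard_setOf_isIntegral_le (K := M))
    exact hfin.to_subtype
  · rw [← algebraicClosure.map_eq_of_algebraicClosure_eq_bot F
      (algebraicClosure_adjoin_simple_eq_bot hx)]
    exact .of_equiv _ (equivMap _ _).toEquiv

theorem finite_algebraicClosure_of_fg {F K : Type*} [Field F] [Finite F] [Field K] [Algebra F K]
    (hK : (⊤ : IntermediateField F K).FG) : Finite (algebraicClosure F K) := by
  suffices Finite (algebraicClosure F (⊤ : IntermediateField F K)) from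
    .of_equiv _ (topEquiv.algebraicClosure).toEquiv
  refine induction_on_adjoin_fg (fun M => Finite (algebraicClosure F M)) ?_ (fun M x _ => ?_) ⊤ hK
  · exact .of_equiv _ (botEquiv F K).symm.algebraicClosure.toEquiv
  · have := finite_algebraicClosure_adjoin_simple (F := F) (M := M) x
    let e : M⟮x⟯.restrictScalars F ≃ₐ[F] M⟮x⟯ := AlgEquiv.refl
    exact .of_equiv _ e.symm.algebraicClosure.toEquiv

universe u

/-- Let `K` be a finitely generated field extension of `𝔽_p`.  Then there is a constant
`c` such that for every `m` and every finite field extension `L/K` with `[L:K] ≤ m`,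
the number of roots of unity in `L` is at most `c ^ m`. -/
theorem stmt12 {p : ℕ} [Fact p.Prime] {K : Type u} [Field K] [Algebra (ZMod p) K]
    (hK : ∃ s : Finset K, IntermediateField.adjoin (ZMod p) (s : Set K) = ⊤) :
    ∃ c : ℕ, ∀ (m : ℕ) (L : Type u) (_ : Field L) (_ : Algebra K L),
      FiniteDimensional K L → Module.finrank K L ≤ m →
        {x : L | ∃ n : ℕ, 0 < n ∧ x ^ n = 1}.Finite ∧
          {x : L | ∃ n : ℕ, 0 < n ∧ x ^ n = 1}.ncard ≤ c ^ m := by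
  have := finite_algebraicClosure_of_fg hK
  refine ⟨Nat.card (algebraicClosure (ZMod p) K), fun m L _ _ _ hm => ?_⟩
  let : Algebra (ZMod p) L := ((algebraMap K L).comp (algebraMap (ZMod p) K)).toAlgebra
  have : IsScalarTower (ZMod p) K L := .of_algebraMap_eq fun _ => rfl
  have hroots : {x : L | ∃ n : ℕ, 0 < n ∧ x ^ n = 1} ⊆ {x : L | IsIntegral (ZMod p) x} :=
    fun x ⟨n, hn, hx⟩ => .of_pow hn (hx ▸ isIntegral_one)
  rw [← Set.encard_le_coe_iff_finite_ncard_le]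
  calc _ ≤ {x : L | IsIntegral (ZMod p) x}.encard := Set.encard_le_encard hroots
    _ ≤ _ := encard_setOf_isIntegral_le
    _ ≤ _ := by gcongr; exact Nat.card_pos
end

section
/- Let C be a commutative artinian algebra over a field k such that C embeds as a k-subalgebra of the r×r matrix algebra over k. Then Spec(C) has at most r points, and for any n invertible in k, the equation x^n = 1 has at most n^r solutions in C. -/
/-!
Lifting the factors of `C ⧸ nilradical C ≅ ∏ₘ C ⧸ m` gives one nonzero idempotent per prime of
`C`, pairwise orthogonal. Their images in `End (kʳ)` have independent nonzero ranges, so there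
are at most `r` primes.

An `n`-th root of unity is determined by its residues modulo the primes: if `x, y` agree modulo
every prime then `x - y` is nilpotent, and `(x - y) * ∑ xⁱ yⁿ⁻¹⁻ⁱ = xⁿ - yⁿ = 0` where the sum is
`n yⁿ⁻¹` plus a multiple of `x - y`, hence a unit. Each residue domain has at most `n` roots.
-/

open Finset Module

theorem eq_of_pow_eq_pow_of_isNilpotent_sub {R : Type*} [CommRing R] {n : ℕ} {x y : R}
    (hn : IsUnit (n : R)) (hy : IsUnit y) (hxy : IsNilpotent (x - y)) (h : x ^ n = y ^ n) :
    x = y := by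
  set S := ∑ i ∈ range n, x ^ i * y ^ (n - 1 - i)
  obtain ⟨c, hc⟩ : x - y ∣ S - n * y ^ (n - 1) := by
    rw [← geom_sum₂_self, ← sum_sub_distrib]
    exact dvd_sum fun i _ => by
      rw [← sub_mul]; exact (sub_dvd_pow_sub_pow x y i).mul_right _
  have hS : IsUnit S := by
    rw [show S = n * y ^ (n - 1) + (x - y) * c by linear_combination hc]
    exact ((Commute.all _ _).isNilpotent_mul_right hxy).isUnit_add_left_of_commute
      (hn.mul (hy.pow _)) (.all _ _)
  have hSxy : S * (x - y) = 0 := by rw [geom_sum₂_mul, h, sub_self]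
  exact sub_eq_zero.mp (hS.mul_right_eq_zero.mp hSxy)

theorem finite_and_ncard_setOf_pow_eq_one_le_of_isDomain {R : Type*} [CommRing R] [IsDomain R]
    {n : ℕ} (hn : n ≠ 0) : {x : R | x ^ n = 1}.Finite ∧ {x : R | x ^ n = 1}.ncard ≤ n := by
  classical
  have hroots : {x : R | x ^ n = 1} = ↑(Polynomial.nthRootsFinset n (1 : R)) := by
    ext x; simp [Polynomial.mem_nthRootsFinset (Nat.pos_of_ne_zero hn)]
  rw [hroots, Set.ncard_coe_finset, Polynomial.nthRootsFinset_def]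
  exact ⟨Finset.finite_toSet _,
    (Multiset.toFinset_card_le _).trans (Polynomial.card_nthRoots n 1)⟩

theorem Set.ncard_univ_pi {ι : Type*} [Fintype ι] {α : ι → Type*} (t : ∀ i, Set (α i)) :
    (Set.pi Set.univ t).ncard = ∏ i, (t i).ncard := by
  simp only [← Nat.card_coe_set_eq, Nat.card_congr (Equiv.Set.univPi t), Nat.card_pi]

theorem finite_and_ncard_setOf_pow_eq_one_le {R : Type*} [CommRing R] [Finite (PrimeSpectrum R)]
    {n : ℕ} (hn : IsUnit (n : R)) (hn₀ : n ≠ 0) :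
    {x : R | x ^ n = 1}.Finite ∧ {x : R | x ^ n = 1}.ncard ≤ n ^ Nat.card (PrimeSpectrum R) := by
  cases nonempty_fintype (PrimeSpectrum R)
  set φ : R → ∀ q : PrimeSpectrum R, R ⧸ q.asIdeal := fun x q => Ideal.Quotient.mk q.asIdeal x
  set t := Set.pi Set.univ fun q : PrimeSpectrum R => {y : R ⧸ q.asIdeal | y ^ n = 1}
  have hmaps : Set.MapsTo φ {x | x ^ n = 1} t := fun x hx q _ => by
    simp only [Set.mem_ofPred_eq, φ, ← map_pow, hx.out, map_one]
  have hinj : Set.InjOn φ {x | x ^ n = 1} := fun x hx y hy hxy =>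
    eq_of_pow_eq_pow_of_isNilpotent_sub hn (IsUnit.of_pow_eq_one hy hn₀)
      (nilpotent_iff_mem_prime.mpr fun J hJ => Ideal.Quotient.eq.mp (congrFun hxy ⟨J, hJ⟩))
      (hx.out.trans hy.out.symm)
  have ht : t.Finite :=
    Set.Finite.pi fun q => (finite_and_ncard_setOf_pow_eq_one_le_of_isDomain hn₀).1
  refine ⟨ht.of_injOn hmaps hinj, (Set.ncard_le_ncard_of_injOn φ hmaps hinj ht).trans ?_⟩
  rw [Set.ncard_univ_pi, Nat.card_eq_fintype_card, ← Finset.card_univ, ← Finset.prod_const]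
  exact Finset.prod_le_prod' fun q _ => (finite_and_ncard_setOf_pow_eq_one_le_of_isDomain hn₀).2

theorem OrthogonalIdempotents.card_le_finrank {K V ι : Type*} [DivisionRing K] [AddCommGroup V]
    [Module K V] [FiniteDimensional K V] [Finite ι] {e : ι → Module.End K V}
    (he : OrthogonalIdempotents e) (hne : ∀ i, e i ≠ 0) : Nat.card ι ≤ finrank K V := by
  classical
  cases nonempty_fintype ι
  have hind : iSupIndep fun i => LinearMap.range (e i) := fun i =>
    (LinearMap.IsIdempotentElem.isCompl (he.idem i)).disjoint.mono_right <|
      iSup₂_le fun j hji => LinearMap.range_le_ker_iff.mpr (he.ortho hji.symm)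
  simpa [LinearMap.range_eq_bot, hne, Nat.card_eq_fintype_card] using
    hind.subtype_ne_bot_le_finrank

theorem IsArtinianRing.exists_orthogonalIdempotents_ne_zero (R : Type*) [CommRing R]
    [IsArtinianRing R] : ∃ e : PrimeSpectrum R → R, OrthogonalIdempotents e ∧ ∀ p, e p ≠ 0 := by
  classical
  have := Fintype.ofFinite (MaximalSpectrum R)
  let ψ := (quotNilradicalEquivPi R).symm.toRingHom
  let ε : MaximalSpectrum R → R ⧸ nilradical R := fun m => ψ (Pi.single m 1)
  have hε : OrthogonalIdempotents ε :=
    ((CompleteOrthogonalIdempotents.single _).map ψ).toOrthogonalIdempotents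
  have hε₀ (m : MaximalSpectrum R) : ε m ≠ 0 := by
    have : Nontrivial (R ⧸ m.asIdeal) := Ideal.Quotient.nontrivial_iff.mpr m.isMaximal.ne_top
    simp [ε, ψ]
  obtain ⟨e, he, hlift⟩ := hε.lift_of_isNilpotent_ker (Ideal.Quotient.mk _)
    (fun x hx => by rwa [Ideal.mk_ker] at hx) (fun m => Ideal.Quotient.mk_surjective (ε m))
  refine ⟨e ∘ primeSpectrumEquivMaximalSpectrum,
    he.embedding primeSpectrumEquivMaximalSpectrum.toEmbedding, fun p hp =>
    hε₀ (primeSpectrumEquivMaximalSpectrum p) ?_⟩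
  rw [← hlift, Function.comp_apply, show e _ = 0 from hp, map_zero]

theorem card_primeSpectrum_le_finrank {A K V : Type*} [CommRing A] [IsArtinianRing A]
    [DivisionRing K] [AddCommGroup V] [Module K V] [FiniteDimensional K V]
    (ρ : A →+* Module.End K V) (hρ : Function.Injective ρ) :
    Nat.card (PrimeSpectrum A) ≤ finrank K V := by
  obtain ⟨e, he, he₀⟩ := IsArtinianRing.exists_orthogonalIdempotents_ne_zero A
  exact (he.map ρ).card_le_finrank fun p => (map_ne_zero_iff ρ hρ).mpr (he₀ p)

/-- Let `C` be a commutative artinian `k`-algebra which embeds as a `k`-subalgebra of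
the `r × r` matrix algebra over `k`.  Then `Spec C` has at most `r` points, and for
every `n` invertible in `k`, the equation `x ^ n = 1` has at most `n ^ r` solutions
in `C`. -/
theorem stmt14 {k : Type u} [Field k] {C : Type u} [CommRing C] [Algebra k C]
    [IsArtinianRing C] (r : ℕ)
    (h : ∃ f : C →ₐ[k] Matrix (Fin r) (Fin r) k, Function.Injective f) :
    (Finite (PrimeSpectrum C) ∧ Nat.card (PrimeSpectrum C) ≤ r) ∧
      ∀ n : ℕ, IsUnit (n : k) →
        {x : C | x ^ n = 1}.Finite ∧ {x : C | x ^ n = 1}.ncard ≤ n ^ r := by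
  obtain ⟨f, hf⟩ := h
  have hspec : Nat.card (PrimeSpectrum C) ≤ r := by
    simpa using card_primeSpectrum_le_finrank (Matrix.toLinAlgEquiv'.toRingHom.comp f.toRingHom)
      (Matrix.toLinAlgEquiv'.injective.comp hf)
  refine ⟨⟨inferInstance, hspec⟩, fun n hn => ?_⟩
  have hn₀ : n ≠ 0 := by rintro rfl; simp at hn
  have hnC : IsUnit (n : C) := by simpa using hn.map (algebraMap k C)
  obtain ⟨hfin, hcard⟩ := finite_and_ncard_setOf_pow_eq_one_le hnC hn₀
  exact ⟨hfin, hcard.trans (Nat.pow_le_pow_right (Nat.pos_of_ne_zero hn₀) hspec)⟩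
end

section
/- Let A be a truncated discrete valuation ring, i.e., A = R/I for a discrete valuation ring R and a proper nonzero ideal I. Then every finitely generated A-module (indeed every A-module) is a direct sum of cyclic A-modules, each of the form A/(t^j) where t is a uniformizing parameter. -/
/-!
Write `A = R/(t^n)`. Every ideal of `A` is `(t^j)` with `j ≤ n`, and an element killed by
`t^(n-j)` is divisible by `t^j`; by Baer's criterion, applied coordinatewise, every free
`A`-module is injective. So if `M` is killed by `t^(m+1)`, a maximal `A`-linearly independent
subset spans a free submodule `F` that splits off: `M = F ⊕ N`. No element of `N` can have zero
annihilator (it could be added to the independent set), and every nonzero ideal of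
`R/(t^(m+1))` contains `t^m`, so `N` is killed by `t^m` and induction on `m` finishes.
-/

open DirectSum Submodule

universe u

section General

variable {A M : Type*} [CommRing A] [AddCommGroup M] [Module A M]

theorem exists_extend_of_span_singleton {g : A} (f : span A {g} →ₗ[A] M) {b : M}
    (hb : f ⟨g, mem_span_singleton_self g⟩ = g • b) :
    ∃ f' : A →ₗ[A] M, ∀ x (hx : x ∈ span A {g}), f' x = f ⟨x, hx⟩ := by
  refine ⟨LinearMap.toSpanSingleton A M b, fun x hx => ?_⟩
  obtain ⟨c, rfl⟩ := mem_span_singleton.mp hx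
  have : (⟨c • g, hx⟩ : span A {g}) = c • ⟨g, mem_span_singleton_self g⟩ := rfl
  rw [this, f.map_smul, hb, LinearMap.toSpanSingleton_apply, smul_smul, smul_eq_mul]

theorem Finsupp.exists_eq_smul_of_forall_dvd {σ : Type*} {g : A} (a : σ →₀ A)
    (h : ∀ x, g ∣ a x) : ∃ b, a = g • b := by
  choose β hβ using h
  refine ⟨a.sum fun x _ => Finsupp.single x (β x), ?_⟩
  rw [Finsupp.smul_sum]
  conv_lhs => rw [← a.sum_single]
  refine Finsupp.sum_congr fun x _ => ?_
  rw [Finsupp.smul_single, smul_eq_mul, ← hβ]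

theorem Submodule.exists_isCompl_of_baer (F : Submodule A M) (hF : Module.Baer A F) :
    ∃ N : Submodule A M, IsCompl F N := by
  obtain ⟨r, hr⟩ := hF.extension_property F.subtype F.injective_subtype LinearMap.id
  exact ⟨_, LinearMap.isCompl_of_proj (f := r) fun x => LinearMap.congr_fun hr x⟩

end General

theorem exists_smul_eq_zero_of_maximal_linearIndepOn {A M : Type*} [Ring A] [AddCommGroup M]
    [Module A M] {s : Set M} (hs : LinearIndepOn A id s)
    (hmax : ∀ s', s ⊆ s' → LinearIndepOn A id s' → s = s') {N : Submodule A M}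
    (hN : Disjoint (span A s) N) {y : M} (hyN : y ∈ N) (hy : y ≠ 0) :
    ∃ a : A, a ≠ 0 ∧ a • y = 0 := by
  by_contra! h
  have hy_indep : LinearIndepOn A id {y} :=
    .singleton' fun a hay => by_contra fun ha => h a ha hay
  have hdisj : Disjoint (span A s) (span A {y}) :=
    hN.mono_right (span_le.mpr (Set.singleton_subset_iff.mpr hyN))
  have hys : y ∈ s :=
    (hmax _ Set.subset_union_left (hs.id_union hy_indep hdisj)).symm ▸ Or.inr rfl
  exact hy ((disjoint_def.mp hN) y (subset_span hys) hyN)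

noncomputable def DirectSum.prodLEquivSum (S : Type*) [Ring S] {ι₁ ι₂ : Type*}
    (β : ι₁ ⊕ ι₂ → Type*) [∀ x, AddCommGroup (β x)] [∀ x, Module S (β x)] :
    ((⨁ i, β (.inl i)) × (⨁ i, β (.inr i))) ≃ₗ[S] ⨁ x, β x := by
  classical
  refine LinearEquiv.ofLinearMap
    (LinearMap.coprod (toModule S _ _ fun i => lof S _ β (.inl i))
      (toModule S _ _ fun i => lof S _ β (.inr i)))
    (toModule S _ _ fun x => Sum.rec
      (fun i => (LinearMap.inl S _ _).comp (lof S ι₁ (fun i => β (.inl i)) i))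
      (fun i => (LinearMap.inr S _ _).comp (lof S ι₂ (fun i => β (.inr i)) i)) x)
    ?_ ?_
  · refine linearMap_ext _ fun x => ?_
    cases x <;> ext : 1 <;> simp [toModule_lof]
  · rw [LinearMap.comp_coprod, ← LinearMap.coprod_inl_inr (M := ⨁ i, β (.inl i))]
    congr 1 <;> refine linearMap_ext _ fun i => ?_ <;> ext : 1 <;> simp [toModule_lof]

noncomputable def Ideal.quotientSpanSingletonEquivOfLE {R : Type*} [CommRing R] (I : Ideal R)
    {s : R} (hle : I ≤ Ideal.span {s}) :
    (R ⧸ Ideal.span {s}) ≃ₗ[R] (R ⧸ I) ⧸ Ideal.span {Ideal.Quotient.mk I s} :=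
  have hmap : (Ideal.span {s}).map (Ideal.Quotient.mkₐ R I) =
      Ideal.span {Ideal.Quotient.mk I s} := by
    rw [Ideal.map_span, Set.image_singleton, Ideal.Quotient.mkₐ_eq_mk]
  ((DoubleQuot.quotQuotEquivQuotOfLEₐ R hle).symm.trans
    (Ideal.quotientEquivAlgOfEq R hmap)).toLinearEquiv

section TruncatedDVR

variable {R : Type*} [CommRing R] [IsDomain R] {t : R}

theorem mk_pow_dvd_of_mk_pow_mul_eq_zero (ht : t ≠ 0) {n j : ℕ} (hj : j ≤ n)
    {α : R ⧸ Ideal.span {t ^ n}} (h : Ideal.Quotient.mk _ (t ^ (n - j)) * α = 0) :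
    Ideal.Quotient.mk _ (t ^ j) ∣ α := by
  obtain ⟨a, rfl⟩ := Ideal.Quotient.mk_surjective α
  rw [← map_mul, Ideal.Quotient.eq_zero_iff_mem, Ideal.mem_span_singleton,
    ← Nat.sub_add_cancel hj, pow_add, Nat.sub_add_cancel hj] at h
  exact map_dvd _ ((mul_dvd_mul_iff_left (pow_ne_zero _ ht)).mp h)

namespace IsDiscreteValuationRing

variable [IsDiscreteValuationRing R]

theorem exists_ideal_eq_span_mk_pow (ht : Irreducible t) (n : ℕ)
    (J : Ideal (R ⧸ Ideal.span {t ^ n})) :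
    ∃ j ≤ n, J = Ideal.span {Ideal.Quotient.mk _ (t ^ j)} := by
  set π := Ideal.Quotient.mk (Ideal.span {t ^ n})
  have hle : Ideal.span {t ^ n} ≤ J.comap π := Ideal.mk_ker.ge.trans (Ideal.comap_mono bot_le)
  have htn : t ^ n ∈ J.comap π := hle (Ideal.mem_span_singleton_self _)
  have hne : J.comap π ≠ ⊥ := fun h => pow_ne_zero n ht.ne_zero (by simpa [h] using htn)
  obtain ⟨j, hj⟩ := ideal_eq_span_pow_irreducible hne ht
  rw [hj, Ideal.mem_span_singleton] at htn
  refine ⟨j, (pow_dvd_pow_iff ht.ne_zero ht.not_isUnit).mp htn, ?_⟩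
  rw [← Ideal.map_comap_of_surjective π Ideal.Quotient.mk_surjective J, hj, Ideal.map_span,
    Set.image_singleton]

theorem mk_pow_mem_of_ne_bot (ht : Irreducible t) {m : ℕ}
    {J : Ideal (R ⧸ Ideal.span {t ^ (m + 1)})} (hJ : J ≠ ⊥) :
    Ideal.Quotient.mk _ (t ^ m) ∈ J := by
  obtain ⟨j, hj, rfl⟩ := exists_ideal_eq_span_mk_pow ht (m + 1) J
  have hjm : j ≤ m := by
    refine Nat.le_of_lt_succ (lt_of_le_of_ne hj fun h => hJ ?_)
    rw [h, Ideal.span_singleton_eq_bot, Ideal.Quotient.eq_zero_iff_mem]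
    exact Ideal.mem_span_singleton_self _
  rw [Ideal.mem_span_singleton]
  exact map_dvd _ (pow_dvd_pow t hjm)

theorem baer_finsupp_quotient_span_pow (ht : Irreducible t) (n : ℕ) (σ : Type*) :
    Module.Baer (R ⧸ Ideal.span {t ^ n}) (σ →₀ R ⧸ Ideal.span {t ^ n}) := by
  intro J f
  obtain ⟨j, hj, rfl⟩ := exists_ideal_eq_span_mk_pow ht n J
  have hg : Ideal.Quotient.mk (Ideal.span {t ^ n}) (t ^ (n - j)) *
      Ideal.Quotient.mk _ (t ^ j) = 0 := by
    rw [← map_mul, ← pow_add, Nat.sub_add_cancel hj, Ideal.Quotient.eq_zero_iff_mem]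
    exact Ideal.mem_span_singleton_self _
  set a := f ⟨_, mem_span_singleton_self _⟩
  have ha : Ideal.Quotient.mk (Ideal.span {t ^ n}) (t ^ (n - j)) • a = 0 := by
    rw [← f.map_smul]
    convert f.map_zero
    exact Subtype.ext hg
  obtain ⟨b, hb⟩ := a.exists_eq_smul_of_forall_dvd fun x =>
    mk_pow_dvd_of_mk_pow_mul_eq_zero ht.ne_zero hj (by simpa using DFunLike.congr_fun ha x)
  exact exists_extend_of_span_singleton f hb

theorem exists_linearEquiv_finsupp_prod_isTorsionBy (ht : Irreducible t) (m : ℕ)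
    (M : Type u) [AddCommGroup M] [Module R M] (hM : Module.IsTorsionBy R M (t ^ (m + 1))) :
    ∃ (σ : Type u) (N : Submodule R M), Module.IsTorsionBy R N (t ^ m) ∧
      Nonempty (M ≃ₗ[R] (σ →₀ R ⧸ Ideal.span {t ^ (m + 1)}) × N) := by
  let A := R ⧸ Ideal.span {t ^ (m + 1)}
  let _ : Module A M := ((Module.isTorsionBySet_span_singleton_iff _).mpr hM).module
  obtain ⟨s, hs, hmax⟩ := exists_maximal_linearIndepOn' A (id : M → M)
  have hs' : LinearIndependent A (Subtype.val : s → M) := hs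
  obtain ⟨N, hFN⟩ := Submodule.exists_isCompl_of_baer _
    ((baer_finsupp_quotient_span_pow ht (m + 1) s).of_equiv hs'.linearCombinationEquiv)
  refine ⟨s, N.restrictScalars R, fun y => Subtype.ext ?_,
    ⟨((prodEquivOfIsCompl _ N hFN).symm.restrictScalars R).trans
      ((hs'.linearCombinationEquiv.symm.restrictScalars R).prodCongr (LinearEquiv.refl R N))⟩⟩
  obtain ⟨y, hyN⟩ := y
  show t ^ m • y = 0
  rcases eq_or_ne y 0 with rfl | hy
  · exact smul_zero _
  have hdisj : Disjoint (span A s) N := by simpa using hFN.disjoint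
  obtain ⟨a, ha, hay⟩ := exists_smul_eq_zero_of_maximal_linearIndepOn hs hmax hdisj hyN hy
  have hann : (LinearMap.toSpanSingleton A M y).ker ≠ ⊥ :=
    fun h => ha ((LinearMap.ker_eq_bot'.mp h) a hay)
  rw [← algebraMap_smul A, Ideal.Quotient.algebraMap_eq]
  exact mk_pow_mem_of_ne_bot ht hann

theorem exists_linearEquiv_directSum_of_isTorsionBy (ht : Irreducible t) (m : ℕ)
    (M : Type u) [AddCommGroup M] [Module R M] (hM : Module.IsTorsionBy R M (t ^ m)) :
    ∃ (ι : Type u) (j : ι → ℕ), (∀ i, j i ≤ m) ∧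
      Nonempty (M ≃ₗ[R] ⨁ i, R ⧸ Ideal.span {t ^ j i}) := by
  induction m generalizing M with
  | zero =>
    have : Subsingleton M := ⟨fun x y => by
      rw [← one_smul R x, ← one_smul R y, ← pow_zero t, hM, hM]⟩
    exact ⟨PEmpty, PEmpty.elim, PEmpty.rec, ⟨LinearEquiv.ofSubsingleton _ _⟩⟩
  | succ m ih =>
    classical
    obtain ⟨σ, N, hN, ⟨e⟩⟩ := exists_linearEquiv_finsupp_prod_isTorsionBy ht m M hM
    obtain ⟨ι, j, hj, ⟨eN⟩⟩ := ih N hN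
    let k : σ ⊕ ι → ℕ := Sum.elim (fun _ => m + 1) j
    refine ⟨σ ⊕ ι, k, ?_, ⟨e.trans <| ((finsuppLEquivDirectSum R _ σ).prodCongr eN).trans
      (DirectSum.prodLEquivSum R fun i => R ⧸ Ideal.span {t ^ k i})⟩⟩
    rintro (i | i)
    exacts [le_rfl, (hj i).trans m.le_succ]

end IsDiscreteValuationRing

end TruncatedDVR

theorem stmt15_general {R : Type u} [CommRing R] [IsDomain R] [IsDiscreteValuationRing R]
    (I : Ideal R) (hI0 : I ≠ ⊥) (t : R) (ht : Irreducible t)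
    (M : Type u) [AddCommGroup M] [Module (R ⧸ I) M] :
    ∃ (ι : Type u) (j : ι → ℕ),
      Nonempty (M ≃ₗ[R ⧸ I]
        ⨁ i : ι, (R ⧸ I) ⧸ Ideal.span {Ideal.Quotient.mk I t ^ j i}) := by
  obtain ⟨n, rfl⟩ := IsDiscreteValuationRing.ideal_eq_span_pow_irreducible hI0 ht
  let _ : Module R M := Module.compHom M (algebraMap R (R ⧸ Ideal.span {t ^ n}))
  have : IsScalarTower R (R ⧸ Ideal.span {t ^ n}) M := IsScalarTower.of_compHom _ _ _
  have hM : Module.IsTorsionBy R M (t ^ n) := fun x => by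
    rw [← algebraMap_smul (R ⧸ Ideal.span {t ^ n}), Ideal.Quotient.algebraMap_eq,
      Ideal.Quotient.eq_zero_iff_mem.mpr (Ideal.mem_span_singleton_self _), zero_smul]
  obtain ⟨ι, j, hj, ⟨e⟩⟩ :=
    IsDiscreteValuationRing.exists_linearEquiv_directSum_of_isTorsionBy ht n M hM
  have quotEquiv (i : ι) : (R ⧸ Ideal.span {t ^ j i}) ≃ₗ[R]
      (R ⧸ Ideal.span {t ^ n}) ⧸ Ideal.span {Ideal.Quotient.mk _ t ^ j i} := by
    rw [← map_pow]
    exact Ideal.quotientSpanSingletonEquivOfLE _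
      (Ideal.span_singleton_le_span_singleton.mpr (pow_dvd_pow t (hj i)))
  exact ⟨ι, j, ⟨(e.trans (DFinsupp.mapRange.linearEquiv quotEquiv)).extendScalarsOfSurjective
    Ideal.Quotient.mk_surjective⟩⟩

/-- Let `A = R/I` be a truncated discrete valuation ring (`R` a DVR, `I` a proper
nonzero ideal).  Then every `A`-module is a direct sum of cyclic `A`-modules of the
form `A/(t^j)`, where `t` is a uniformizing parameter. -/
theorem stmt15 {R : Type u} [CommRing R] [IsDomain R] [IsDiscreteValuationRing R]
    (I : Ideal R) (hI0 : I ≠ ⊥) (hI1 : I ≠ ⊤) (t : R) (ht : Irreducible t)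
    (M : Type u) [AddCommGroup M] [Module (R ⧸ I) M] :
    ∃ (ι : Type u) (j : ι → ℕ),
      Nonempty (M ≃ₗ[R ⧸ I]
        ⨁ i : ι, (R ⧸ I) ⧸ Ideal.span {Ideal.Quotient.mk I t ^ j i}) :=
  stmt15_general I hI0 t ht M
end

section
/- Let A be a commutative ring and M an A-module. The functor from commutative A-algebras to sets given by B ↦ M ⊗_A B preserves equalizers if and only if M is a flat A-module. -/
open TensorProduct

set_option synthInstance.maxHeartbeats 1000000
set_option maxHeartbeats 4000000

section Aux

variable {A : Type u} [CommRing A] (M : Type u) [AddCommGroup M] [Module A M] (I : Ideal A)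

/-- The two algebra maps out of the dual numbers whose equalizer is `A ⊕ I`. -/
noncomputable def stmt17F : TrivSqZeroExt A A →ₐ[A] TrivSqZeroExt A (A ⧸ I) :=
  TrivSqZeroExt.map I.mkQ

noncomputable def stmt17G : TrivSqZeroExt A A →ₐ[A] TrivSqZeroExt A (A ⧸ I) :=
  TrivSqZeroExt.map 0

lemma stmt17_mem (x : TrivSqZeroExt A A) :
    x ∈ AlgHom.equalizer (stmt17F I) (stmt17G I) ↔ TrivSqZeroExt.snd x ∈ I := by
  rw [AlgHom.mem_equalizer]
  constructor
  · intro hx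
    have h2 := congrArg TrivSqZeroExt.snd hx
    rw [stmt17F, stmt17G, TrivSqZeroExt.snd_map, TrivSqZeroExt.snd_map,
      LinearMap.zero_apply, Submodule.mkQ_apply, Submodule.Quotient.mk_eq_zero] at h2
    exact h2
  · intro hx
    refine TrivSqZeroExt.ext ?_ ?_
    · rw [stmt17F, stmt17G, TrivSqZeroExt.fst_map, TrivSqZeroExt.fst_map]
    · rw [stmt17F, stmt17G, TrivSqZeroExt.snd_map, TrivSqZeroExt.snd_map,
        LinearMap.zero_apply, Submodule.mkQ_apply, Submodule.Quotient.mk_eq_zero]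
      exact hx

lemma stmt17_forward
    (hinj : Function.Injective
      (LinearMap.lTensor M (AlgHom.equalizer (stmt17F I) (stmt17G I)).val.toLinearMap)) :
    Function.Injective (LinearMap.lTensor M I.subtype) := by
  set S := AlgHom.equalizer (stmt17F I) (stmt17G I) with hSdef
  -- the inclusion `I → S`, `x ↦ (0, x)`
  let j : I →ₗ[A] S :=
    LinearMap.codRestrict (Subalgebra.toSubmodule S)
      ((TrivSqZeroExt.inrHom A A) ∘ₗ I.subtype)
      (fun c => (stmt17_mem I _).2 (by simpa using c.2))
  -- the retraction `S → I`, `(a, x) ↦ x`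
  let r : S →ₗ[A] I :=
    LinearMap.codRestrict I ((TrivSqZeroExt.sndHom A A) ∘ₗ S.val.toLinearMap)
      (fun c => (stmt17_mem I _).1 c.2)
  have hrj : r ∘ₗ j = LinearMap.id := by ext x; rfl
  have hjinj : Function.Injective (LinearMap.lTensor M j) := by
    have hcomp : (LinearMap.lTensor M r) ∘ₗ (LinearMap.lTensor M j) = LinearMap.id := by
      rw [← LinearMap.lTensor_comp, hrj, LinearMap.lTensor_id]
    exact Function.LeftInverse.injective (g := LinearMap.lTensor M r) fun t => by
      rw [← LinearMap.comp_apply, hcomp, LinearMap.id_apply]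
  -- linear projections and inclusions of the dual numbers
  set fstL : TrivSqZeroExt A A →ₗ[A] A := (TrivSqZeroExt.fstHom A A A).toLinearMap with hfstL
  set sndL : TrivSqZeroExt A A →ₗ[A] A := TrivSqZeroExt.sndHom A A with hsndL
  set inlL : A →ₗ[A] TrivSqZeroExt A A := Algebra.linearMap A (TrivSqZeroExt A A) with hinlL
  set inrL : A →ₗ[A] TrivSqZeroExt A A := TrivSqZeroExt.inrHom A A with hinrL
  have hid : inlL ∘ₗ fstL + inrL ∘ₗ sndL = LinearMap.id := by
    apply LinearMap.ext
    intro x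
    show TrivSqZeroExt.inl (TrivSqZeroExt.fst x) + TrivSqZeroExt.inr (TrivSqZeroExt.snd x) = x
    exact TrivSqZeroExt.inl_fst_add_inr_snd_eq x
  set k : I →ₗ[A] TrivSqZeroExt A A := S.val.toLinearMap ∘ₗ j with hk
  have hfstk : fstL ∘ₗ k = 0 := by ext x; exact TrivSqZeroExt.fst_inr A (x : A)
  have hsndk : sndL ∘ₗ k = I.subtype := by ext x; exact TrivSqZeroExt.snd_inr A (x : A)
  rw [injective_iff_map_eq_zero]
  intro t ht
  have h1 : LinearMap.lTensor M fstL (LinearMap.lTensor M k t) = 0 := by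
    rw [← LinearMap.comp_apply, ← LinearMap.lTensor_comp, hfstk, LinearMap.lTensor_zero,
      LinearMap.zero_apply]
  have h2 : LinearMap.lTensor M sndL (LinearMap.lTensor M k t) = 0 := by
    rw [← LinearMap.comp_apply, ← LinearMap.lTensor_comp, hsndk, ht]
  have hk0 : LinearMap.lTensor M k t = 0 := by
    have := congrArg (fun u => LinearMap.lTensor M (inlL ∘ₗ fstL + inrL ∘ₗ sndL) u)
      (rfl : LinearMap.lTensor M k t = LinearMap.lTensor M k t)
    calc LinearMap.lTensor M k t
        = LinearMap.lTensor M (inlL ∘ₗ fstL + inrL ∘ₗ sndL) (LinearMap.lTensor M k t) := by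
          rw [hid, LinearMap.lTensor_id, LinearMap.id_apply]
      _ = LinearMap.lTensor M inlL (LinearMap.lTensor M fstL (LinearMap.lTensor M k t)) +
          LinearMap.lTensor M inrL (LinearMap.lTensor M sndL (LinearMap.lTensor M k t)) := by
          simp only [LinearMap.lTensor_add, LinearMap.add_apply, LinearMap.lTensor_comp,
            LinearMap.comp_apply]
      _ = 0 := by rw [h1, h2, map_zero, map_zero, add_zero]
  have hj0 : LinearMap.lTensor M j t = 0 := by
    apply hinj
    rw [map_zero, ← LinearMap.comp_apply, ← LinearMap.lTensor_comp, ← hk, hk0]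
  exact hjinj (by rw [hj0, map_zero])

end Aux

/-- The functor `B ↦ M ⊗[A] B`, from commutative `A`-algebras to sets, preserves
equalizers if and only if `M` is a flat `A`-module.  Preservation of the equalizer of
`f g : B →ₐ[A] C` means the canonical map `M ⊗[A] Eq(f,g) → M ⊗[A] B` is injective
with image the equalizer `{y : M ⊗[A] B | (M ⊗ f) y = (M ⊗ g) y}`. -/
theorem stmt17 {A : Type u} [CommRing A] (M : Type u) [AddCommGroup M] [Module A M] :
    (∀ (B C : Type u) (_ : CommRing B) (_ : CommRing C) (_ : Algebra A B)
        (_ : Algebra A C) (f g : B →ₐ[A] C),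
        Function.Injective
            (LinearMap.lTensor M (AlgHom.equalizer f g).val.toLinearMap) ∧
          Set.range (LinearMap.lTensor M (AlgHom.equalizer f g).val.toLinearMap) =
            {y : M ⊗[A] B |
              LinearMap.lTensor M f.toLinearMap y =
                LinearMap.lTensor M g.toLinearMap y}) ↔
      Module.Flat A M := by
  constructor
  · intro h
    rw [Module.Flat.iff_lTensor_injective']
    intro I
    exact stmt17_forward M I
      (h (TrivSqZeroExt A A) (TrivSqZeroExt A (A ⧸ I)) _ _ _ _ (stmt17F I) (stmt17G I)).1
  · intro hM B C _ _ _ _ f g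
    haveI := hM
    refine ⟨Module.Flat.lTensor_preserves_injective_linearMap _ Subtype.val_injective, ?_⟩
    have hexact : Function.Exact (AlgHom.equalizer f g).val.toLinearMap
        (f.toLinearMap - g.toLinearMap) := by
      intro b
      rw [LinearMap.sub_apply, sub_eq_zero]
      constructor
      · intro hb
        exact ⟨⟨b, hb⟩, rfl⟩
      · rintro ⟨⟨b', hb'⟩, rfl⟩
        exact hb'
    have htex := Module.Flat.lTensor_exact M hexact
    ext y
    rw [Set.mem_setOf_eq, ← sub_eq_zero, ← LinearMap.sub_apply, ← LinearMap.lTensor_sub]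
    exact (htex y).symm
end
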